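/- arXiv:1904.09683 — 6 statements merged into one kernel-verified Lean document; each statement's English description precedes it below -/
import Mathlib

section
/- Let t₀ < T and I = [t₀, T]. Let F, G : ℝ → ℝ be continuous on I, and let Φ : ℝ → ℝ be twice continuously differentiable with Φ(t) > 0 for all t ∈ I. Suppose G(t) ≤ -Φ''(t)/Φ(t) - (Φ'(t)/Φ(t))·F(t) for all t ∈ I. Then any twice differentiable function Y : ℝ → ℝ satisfying Y''(t) + F(t)·Y'(t) + G(t)·Y(t) = 0 for all t ∈ I, with initial data Y(t₀) = Φ(t₀) and Y'(t₀) = Φ'(t₀), satisfies Y(t) ≥ Φ(t) for all t ∈ I. -/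
/-!
With the Wronskian `W = Y' Φ - Y Φ'`, the equation for `Y` gives
`W' + F W = -Y (Φ'' + F Φ' + G Φ)`, and the hypothesis on `G` says exactly that
`Φ'' + F Φ' + G Φ ≤ 0`. So as long as `Y ≥ 0`, the integrating factor `exp (∫ F)` makes
`W · exp (∫ F)` nondecreasing; since `W (t₀) = 0` this gives `W ≥ 0`, i.e. `(Y / Φ)' ≥ 0`,
and `Y / Φ ≥ (Y / Φ) (t₀) = 1`. Positivity of `Y` is recovered by continuous induction: at
the first zero `c` of `Y` the argument applies on `[t₀, c]` and yields `Y c ≥ Φ c > 0`.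
-/

open Set Real

theorem nonneg_of_deriv_add_mul_nonneg {a b : ℝ} {p f f' : ℝ → ℝ}
    (hp : ContinuousOn p (Icc a b)) (hf : ContinuousOn f (Icc a b))
    (hf' : ∀ t ∈ Ioo a b, HasDerivAt f (f' t) t)
    (hineq : ∀ t ∈ Ioo a b, 0 ≤ f' t + p t * f t) (ha : 0 ≤ f a) :
    ∀ t ∈ Icc a b, 0 ≤ f t := by
  set ψ : ℝ → ℝ := fun t => ∫ s in a..t, p s
  have hψ_cont : ContinuousOn ψ (Icc a b) := by
    rcases le_or_gt a b with hab | hba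
    · simpa [uIcc_of_le hab] using
        intervalIntegral.continuousOn_primitive_interval (hp.integrableOn_Icc.mono_set
          (uIcc_of_le hab).subset)
    · simp [Icc_eq_empty_of_lt hba]
  have hψ_deriv : ∀ t ∈ Ioo a b, HasDerivAt ψ (p t) t := fun t ht =>
    intervalIntegral.integral_hasDerivAt_right
      ((hp.mono (uIcc_subset_Icc (left_mem_Icc.2 (ht.1.trans ht.2).le)
        (Ioo_subset_Icc_self ht))).intervalIntegrable)
      ((hp.mono Ioo_subset_Icc_self).stronglyMeasurableAtFilter isOpen_Ioo t ht)
      (hp.continuousAt (Icc_mem_nhds ht.1 ht.2))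
  have hmono : MonotoneOn (fun t => f t * exp (ψ t)) (Icc a b) := by
    refine monotoneOn_of_hasDerivWithinAt_nonneg (convex_Icc a b) (hf.mul hψ_cont.rexp)
      (fun t ht => ?_) (fun t ht => ?_) (f' := fun t => (f' t + p t * f t) * exp (ψ t))
    · rw [interior_Icc] at ht
      exact (((hf' t ht).mul (hψ_deriv t ht).exp).congr_deriv (by ring)).hasDerivWithinAt
    · rw [interior_Icc] at ht
      exact mul_nonneg (hineq t ht) (exp_pos _).le
  intro t ht
  have hle := hmono (left_mem_Icc.2 (ht.1.trans ht.2)) ht ht.1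
  exact (mul_nonneg_iff_of_pos_right (exp_pos (ψ t))).1
    ((mul_nonneg ha (exp_pos _).le).trans hle)

theorem le_of_wronskian_nonneg {a b : ℝ} {u v u' v' : ℝ → ℝ}
    (hu : ContinuousOn u (Icc a b)) (hv : ContinuousOn v (Icc a b))
    (hu' : ∀ t ∈ Ioo a b, HasDerivAt u (u' t) t) (hv' : ∀ t ∈ Ioo a b, HasDerivAt v (v' t) t)
    (hv_pos : ∀ t ∈ Icc a b, 0 < v t) (hW : ∀ t ∈ Ioo a b, 0 ≤ u' t * v t - u t * v' t)
    (ha : v a ≤ u a) :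
    ∀ t ∈ Icc a b, v t ≤ u t := by
  have hmono : MonotoneOn (fun t => u t / v t) (Icc a b) := by
    refine monotoneOn_of_hasDerivWithinAt_nonneg (convex_Icc a b)
      (hu.div hv fun t ht => (hv_pos t ht).ne') (fun t ht => ?_) (fun t ht => ?_)
      (f' := fun t => (u' t * v t - u t * v' t) / v t ^ 2)
    · rw [interior_Icc] at ht
      exact ((hu' t ht).div (hv' t ht)
        (hv_pos t (Ioo_subset_Icc_self ht)).ne').hasDerivWithinAt
    · rw [interior_Icc] at ht
      exact div_nonneg (hW t ht) (sq_nonneg _)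
  intro t ht
  have ha_mem : a ∈ Icc a b := left_mem_Icc.2 (ht.1.trans ht.2)
  have hle : u a / v a ≤ u t / v t := hmono ha_mem ht ht.1
  rw [← one_le_div (hv_pos t ht)]
  exact ((one_le_div (hv_pos a ha_mem)).2 ha).trans hle

theorem ContinuousOn.pos_of_pos_on_Ioo {a b : ℝ} {f : ℝ → ℝ} (hf : ContinuousOn f (Icc a b))
    (h : ∀ c ∈ Icc a b, (∀ t ∈ Ioo a c, 0 < f t) → 0 < f c) :
    ∀ t ∈ Icc a b, 0 < f t := by
  by_contra! ⟨t, ht, hft⟩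
  have hK : IsCompact (Icc a b ∩ f ⁻¹' Iic 0) :=
    isCompact_Icc.of_isClosed_subset (hf.preimage_isClosed_of_isClosed isClosed_Icc isClosed_Iic)
      inter_subset_left
  obtain ⟨c, ⟨hc, hfc⟩, hc_least⟩ := hK.exists_isLeast ⟨t, ht, hft⟩
  refine (h c hc fun s hs => ?_).not_ge hfc
  by_contra! hfs
  exact (hc_least ⟨⟨hs.1.le, hs.2.le.trans hc.2⟩, hfs⟩).not_gt hs.2

theorem le_of_ode_of_nonneg {a b : ℝ} {F G Φ Y : ℝ → ℝ} (hF : ContinuousOn F (Icc a b))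
    (hΦ1 : ∀ t ∈ Icc a b, DifferentiableAt ℝ Φ t)
    (hΦ2 : ∀ t ∈ Icc a b, DifferentiableAt ℝ (deriv Φ) t)
    (hΦpos : ∀ t ∈ Icc a b, 0 < Φ t)
    (hLΦ : ∀ t ∈ Ioo a b, deriv (deriv Φ) t + F t * deriv Φ t + G t * Φ t ≤ 0)
    (hY1 : ∀ t ∈ Icc a b, DifferentiableAt ℝ Y t)
    (hY2 : ∀ t ∈ Icc a b, DifferentiableAt ℝ (deriv Y) t)
    (hODE : ∀ t ∈ Ioo a b, deriv (deriv Y) t + F t * deriv Y t + G t * Y t = 0)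
    (hic : Y a = Φ a) (hic' : deriv Y a = deriv Φ a) (hY : ∀ t ∈ Ioo a b, 0 ≤ Y t) :
    ∀ t ∈ Icc a b, Φ t ≤ Y t := by
  set W : ℝ → ℝ := fun t => deriv Y t * Φ t - Y t * deriv Φ t
  have hW : ∀ t ∈ Icc a b,
      HasDerivAt W (deriv (deriv Y) t * Φ t - Y t * deriv (deriv Φ) t) t := fun t ht =>
    (((hY2 t ht).hasDerivAt.mul (hΦ1 t ht).hasDerivAt).sub
      ((hY1 t ht).hasDerivAt.mul (hΦ2 t ht).hasDerivAt)).congr_deriv (by ring)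
  have hW_nonneg : ∀ t ∈ Icc a b, 0 ≤ W t := by
    refine nonneg_of_deriv_add_mul_nonneg hF
      (fun t ht => (hW t ht).continuousAt.continuousWithinAt)
      (fun t ht => hW t (Ioo_subset_Icc_self ht)) (fun t ht => ?_)
      (by simp [W, hic, hic', mul_comm])
    have hWronskian : deriv (deriv Y) t * Φ t - Y t * deriv (deriv Φ) t + F t * W t
        = Y t * -(deriv (deriv Φ) t + F t * deriv Φ t + G t * Φ t) := by
      linear_combination Φ t * hODE t ht
    rw [hWronskian]
    exact mul_nonneg (hY t ht) (neg_nonneg.2 (hLΦ t ht))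
  refine le_of_wronskian_nonneg (fun t ht => (hY1 t ht).continuousAt.continuousWithinAt)
    (fun t ht => (hΦ1 t ht).continuousAt.continuousWithinAt)
    (fun t ht => (hY1 t (Ioo_subset_Icc_self ht)).hasDerivAt)
    (fun t ht => (hΦ1 t (Ioo_subset_Icc_self ht)).hasDerivAt) hΦpos
    (fun t ht => hW_nonneg t (Ioo_subset_Icc_self ht)) hic.ge

theorem comparison_principle_lower_bound_general
    (t₀ T : ℝ)
    (F G Φ Y : ℝ → ℝ)
    (hF : ContinuousOn F (Icc t₀ T))
    (hΦ : ContDiff ℝ 2 Φ)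
    (hΦpos : ∀ t ∈ Icc t₀ T, 0 < Φ t)
    (hGle : ∀ t ∈ Icc t₀ T,
      G t ≤ -(deriv (deriv Φ) t) / Φ t - (deriv Φ t / Φ t) * F t)
    (hY1 : ∀ t ∈ Icc t₀ T, DifferentiableAt ℝ Y t)
    (hY2 : ∀ t ∈ Icc t₀ T, DifferentiableAt ℝ (deriv Y) t)
    (hODE : ∀ t ∈ Icc t₀ T,
      deriv (deriv Y) t + F t * deriv Y t + G t * Y t = 0)
    (hic : Y t₀ = Φ t₀) (hic' : deriv Y t₀ = deriv Φ t₀) :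
    ∀ t ∈ Icc t₀ T, Φ t ≤ Y t := by
  have hΦ1 : Differentiable ℝ Φ := hΦ.differentiable two_ne_zero
  have hΦ2 : Differentiable ℝ (deriv Φ) :=
    ((contDiff_succ_iff_deriv (n := 1)).1 hΦ).2.2.differentiable one_ne_zero
  have hLΦ : ∀ t ∈ Icc t₀ T, deriv (deriv Φ) t + F t * deriv Φ t + G t * Φ t ≤ 0 := by
    intro t ht
    have hG := hGle t ht
    rw [div_mul_eq_mul_div, ← sub_div, le_div_iff₀ (hΦpos t ht)] at hG
    linarith
  have hcomparison : ∀ c ≤ T, (∀ t ∈ Ioo t₀ c, 0 ≤ Y t) → ∀ t ∈ Icc t₀ c, Φ t ≤ Y t :=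
    fun c hc hY => by
      have hsub : Icc t₀ c ⊆ Icc t₀ T := Icc_subset_Icc_right hc
      exact le_of_ode_of_nonneg (hF.mono hsub) (fun t _ => hΦ1 t) (fun t _ => hΦ2 t)
        (fun t ht => hΦpos t (hsub ht)) (fun t ht => hLΦ t (hsub (Ioo_subset_Icc_self ht)))
        (fun t ht => hY1 t (hsub ht)) (fun t ht => hY2 t (hsub ht))
        (fun t ht => hODE t (hsub (Ioo_subset_Icc_self ht))) hic hic' hY
  have hYpos : ∀ t ∈ Icc t₀ T, 0 < Y t :=
    ContinuousOn.pos_of_pos_on_Ioo (fun t ht => (hY1 t ht).continuousAt.continuousWithinAt)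
      fun c hc hY => (hΦpos c hc).trans_le
        (hcomparison c hc.2 (fun t ht => (hY t ht).le) c (right_mem_Icc.2 hc.1))
  exact hcomparison T le_rfl fun t ht => (hYpos t (Ioo_subset_Icc_self ht)).le

/-- Comparison principle (Theorem 1): if `G t ≤ -Φ''/Φ - (Φ'/Φ)·F` on `I = [t₀, T]`
for a positive `C²` comparison function `Φ`, then a solution of
`Y'' + F·Y' + G·Y = 0` with initial data matching `Φ` dominates `Φ` on `I`. -/
theorem comparison_principle_lower_bound
    (t₀ T : ℝ) (ht : t₀ < T)
    (F G Φ Y : ℝ → ℝ)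
    (hF : ContinuousOn F (Icc t₀ T))
    (hG : ContinuousOn G (Icc t₀ T))
    (hΦ : ContDiff ℝ 2 Φ)
    (hΦpos : ∀ t ∈ Icc t₀ T, 0 < Φ t)
    (hGle : ∀ t ∈ Icc t₀ T,
      G t ≤ -(deriv (deriv Φ) t) / Φ t - (deriv Φ t / Φ t) * F t)
    (hY1 : ∀ t ∈ Icc t₀ T, DifferentiableAt ℝ Y t)
    (hY2 : ∀ t ∈ Icc t₀ T, DifferentiableAt ℝ (deriv Y) t)
    (hODE : ∀ t ∈ Icc t₀ T,
      deriv (deriv Y) t + F t * deriv Y t + G t * Y t = 0)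
    (hic : Y t₀ = Φ t₀) (hic' : deriv Y t₀ = deriv Φ t₀) :
    ∀ t ∈ Icc t₀ T, Φ t ≤ Y t :=
  comparison_principle_lower_bound_general t₀ T F G Φ Y hF hΦ hΦpos hGle hY1 hY2 hODE hic hic'
end

section
/- Let t₀ < T, I = [t₀, T], and δ > 0. Let F, G : ℝ → ℝ be continuous on I and μ : ℝ → ℝ twice continuously differentiable with μ(t) > 0 on I. Suppose G(t) ≤ -μ''(t)/μ(t) - 2δ·μ'(t)/μ(t) - δ² - (μ'(t)/μ(t) + δ)·F(t) for all t ∈ I. Then any twice differentiable Y : ℝ → ℝ satisfying Y'' + F(t)Y' + G(t)Y = 0 on I, with Y(t₀) = μ(t₀)·exp(δt₀) and Y'(t₀) = (μ'(t₀) + δμ(t₀))·exp(δt₀), satisfies Y(t) ≥ μ(t)·exp(δt) for all t ∈ I. -/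
open Set Real Filter Topology

/-!
Write `L u = u'' + F u' + G u`. The hypothesis on `G` says exactly that `Φ = μ e^{δt}` satisfies
`L Φ ≤ 0`. For the Wronskian `W = Y' Φ - Y Φ'` one has `W' + F W = -Y · L Φ`, so as long as
`Y ≥ 0` the integrating factor `exp (∫ F)` makes `W` nonnegative (it vanishes at `t₀`), hence
`(Y / Φ)' = W / Φ² ≥ 0` and `Y / Φ ≥ 1`. In particular `Y ≥ Φ > 0` wherever `Y ≥ 0` up to that
point, and a continuous induction shows that `Y` never becomes negative on `[t₀, T]`.
-/

variable {a b : ℝ} {F G y y' y'' φ φ' φ'' : ℝ → ℝ}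

theorem ContinuousOn.hasDerivAt_intervalIntegral_of_mem_Ioo (hF : ContinuousOn F (Icc a b))
    {s : ℝ} (hs : s ∈ Ioo a b) : HasDerivAt (fun u => ∫ x in a..u, F x) (F s) s :=
  intervalIntegral.integral_hasDerivAt_right
    ((hF.mono (Icc_subset_Icc_right hs.2.le)).intervalIntegrable_of_Icc hs.1.le)
    ((hF.mono Ioo_subset_Icc_self).stronglyMeasurableAtFilter isOpen_Ioo s hs)
    (hF.continuousAt (Icc_mem_nhds hs.1 hs.2))

theorem nonneg_of_hasDerivAt_add_mul_nonneg {W W' : ℝ → ℝ} (hF : ContinuousOn F (Icc a b))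
    (hW : ContinuousOn W (Icc a b)) (hW' : ∀ t ∈ Ioo a b, HasDerivAt W (W' t) t)
    (hineq : ∀ t ∈ Ioo a b, 0 ≤ W' t + F t * W t) (ha : 0 ≤ W a) :
    ∀ t ∈ Icc a b, 0 ≤ W t := by
  intro t ht
  have hab : a ≤ b := ht.1.trans ht.2
  set ρ : ℝ → ℝ := fun s => exp (∫ x in a..s, F x)
  have hρ_cont : ContinuousOn ρ (Icc a b) := by
    have hprim := intervalIntegral.continuousOn_primitive_interval'
      (hF.intervalIntegrable_of_Icc (μ := MeasureTheory.volume) hab) left_mem_uIcc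
    rw [uIcc_of_le hab] at hprim
    exact continuous_exp.comp_continuousOn hprim
  have hρ : ∀ s ∈ Ioo a b, HasDerivAt ρ (ρ s * F s) s :=
    fun s hs => (hF.hasDerivAt_intervalIntegral_of_mem_Ioo hs).exp
  have hρW : ∀ s ∈ Ioo a b, HasDerivAt (fun s => ρ s * W s) (ρ s * (W' s + F s * W s)) s :=
    fun s hs => ((hρ s hs).fun_mul (hW' s hs)).congr_deriv (by ring)
  have hmono : MonotoneOn (fun s => ρ s * W s) (Icc a b) := by
    refine monotoneOn_of_hasDerivWithinAt_nonneg (f' := fun s => ρ s * (W' s + F s * W s))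
      (convex_Icc a b) (hρ_cont.mul hW) ?_ ?_ <;> rw [interior_Icc]
    · exact fun s hs => (hρW s hs).hasDerivWithinAt
    · exact fun s hs => mul_nonneg (exp_pos _).le (hineq s hs)
  have hρa : ρ a = 1 := by simp [ρ]
  have := hmono (left_mem_Icc.2 hab) ht ht.1
  simp only [hρa, one_mul] at this
  exact (mul_nonneg_iff_of_pos_left (exp_pos _)).1 (ha.trans this)

theorem nonneg_of_forall_Icc_nonneg_imp_pos {f : ℝ → ℝ} (hf : ContinuousOn f (Icc a b))
    (ha : 0 ≤ f a) (h : ∀ c ∈ Ico a b, (∀ t ∈ Icc a c, 0 ≤ f t) → 0 < f c) :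
    ∀ t ∈ Icc a b, 0 ≤ f t := by
  refine IsClosed.Icc_subset_of_forall_mem_nhdsGT_of_Icc_subset (s := {t | 0 ≤ f t}) ?_ ha ?_
  · rw [inter_comm]
    exact hf.preimage_isClosed_of_isClosed isClosed_Icc isClosed_Ici
  · intro c hc hsub
    have hcont : ContinuousWithinAt f (Ioc c b) c :=
      (hf c (Ico_subset_Icc_self hc)).mono fun x hx => ⟨hc.1.trans hx.1.le, hx.2⟩
    rw [← nhdsWithin_Ioc_eq_nhdsGT hc.2]
    exact (hcont.eventually (eventually_gt_nhds (h c hc hsub))).mono fun _ hx => hx.le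

theorem HasDerivAt.mul_exp_const_mul {g : ℝ → ℝ} {g' t : ℝ} (hg : HasDerivAt g g' t) (δ : ℝ) :
    HasDerivAt (fun s => g s * Real.exp (δ * s)) ((g' + δ * g t) * Real.exp (δ * t)) t :=
  (hg.fun_mul ((hasDerivAt_const_mul δ).exp)).congr_deriv (by ring)

theorem monotoneOn_div_of_wronskian_nonneg (hy : ∀ t ∈ Icc a b, HasDerivAt y (y' t) t)
    (hφ : ∀ t ∈ Icc a b, HasDerivAt φ (φ' t) t) (hφpos : ∀ t ∈ Icc a b, 0 < φ t)
    (hW : ∀ t ∈ Icc a b, 0 ≤ y' t * φ t - y t * φ' t) :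
    MonotoneOn (fun t => y t / φ t) (Icc a b) := by
  have hderiv : ∀ t ∈ Icc a b, HasDerivAt (fun t => y t / φ t)
      ((y' t * φ t - y t * φ' t) / φ t ^ 2) t :=
    fun t ht => (hy t ht).div (hφ t ht) (hφpos t ht).ne'
  refine monotoneOn_of_hasDerivWithinAt_nonneg
    (f' := fun t => (y' t * φ t - y t * φ' t) / φ t ^ 2) (convex_Icc a b)
    (fun t ht => (hderiv t ht).continuousAt.continuousWithinAt) ?_ ?_ <;> rw [interior_Icc]
  · exact fun t ht => (hderiv t (Ioo_subset_Icc_self ht)).hasDerivWithinAt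
  · exact fun t ht => div_nonneg (hW t (Ioo_subset_Icc_self ht)) (sq_nonneg _)

section Comparison

variable (hF : ContinuousOn F (Icc a b))
  (hy : ∀ t ∈ Icc a b, HasDerivAt y (y' t) t) (hy' : ∀ t ∈ Icc a b, HasDerivAt y' (y'' t) t)
  (hφ : ∀ t ∈ Icc a b, HasDerivAt φ (φ' t) t) (hφ' : ∀ t ∈ Icc a b, HasDerivAt φ' (φ'' t) t)
  (hode : ∀ t ∈ Icc a b, y'' t + F t * y' t + G t * y t = 0)
  (hsuper : ∀ t ∈ Icc a b, φ'' t + F t * φ' t + G t * φ t ≤ 0)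
include hF hy hy' hφ hφ' hode hsuper

theorem wronskian_nonneg_of_nonneg (hy₀ : ∀ t ∈ Icc a b, 0 ≤ y t)
    (ha : 0 ≤ y' a * φ a - y a * φ' a) : ∀ t ∈ Icc a b, 0 ≤ y' t * φ t - y t * φ' t := by
  have hW : ∀ t ∈ Icc a b, HasDerivAt (fun s => y' s * φ s - y s * φ' s)
      (y'' t * φ t + y' t * φ' t - (y' t * φ' t + y t * φ'' t)) t :=
    fun t ht => ((hy' t ht).mul (hφ t ht)).sub ((hy t ht).mul (hφ' t ht))
  refine nonneg_of_hasDerivAt_add_mul_nonneg hF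
    (fun t ht => (hW t ht).continuousAt.continuousWithinAt)
    (fun t ht => hW t (Ioo_subset_Icc_self ht)) (fun t ht => ?_) ha
  replace ht := Ioo_subset_Icc_self ht
  have hLW : y'' t * φ t + y' t * φ' t - (y' t * φ' t + y t * φ'' t)
        + F t * (y' t * φ t - y t * φ' t)
      = y t * -(φ'' t + F t * φ' t + G t * φ t) := by
    linear_combination φ t * hode t ht
  rw [hLW]
  exact mul_nonneg (hy₀ t ht) (neg_nonneg.2 (hsuper t ht))

variable (hφpos : ∀ t ∈ Icc a b, 0 < φ t) (hya : y a = φ a) (hy'a : y' a = φ' a)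
include hφpos hya hy'a

theorem le_of_supersolution_of_nonneg (hy₀ : ∀ t ∈ Icc a b, 0 ≤ y t) :
    ∀ t ∈ Icc a b, φ t ≤ y t := by
  intro t ht
  have ha : a ∈ Icc a b := left_mem_Icc.2 (ht.1.trans ht.2)
  have hW := wronskian_nonneg_of_nonneg hF hy hy' hφ hφ' hode hsuper hy₀
    (by rw [hya, hy'a, mul_comm, sub_self])
  have := monotoneOn_div_of_wronskian_nonneg hy hφ hφpos hW ha ht ht.1
  dsimp only at this
  rw [hya, div_self (hφpos a ha).ne'] at this
  exact (one_le_div (hφpos t ht)).1 this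

theorem le_of_supersolution : ∀ t ∈ Icc a b, φ t ≤ y t := by
  intro t ht
  have hab : a ≤ b := ht.1.trans ht.2
  refine le_of_supersolution_of_nonneg hF hy hy' hφ hφ' hode hsuper hφpos hya hy'a ?_ t ht
  refine nonneg_of_forall_Icc_nonneg_imp_pos
    (fun t ht => (hy t ht).continuousAt.continuousWithinAt)
    (hya ▸ (hφpos a (left_mem_Icc.2 hab)).le) fun c hc hy₀ => ?_
  have hsub : Icc a c ⊆ Icc a b := Icc_subset_Icc_right hc.2.le
  have restrict {P : ℝ → Prop} (h : ∀ t ∈ Icc a b, P t) : ∀ t ∈ Icc a c, P t :=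
    fun t ht => h t (hsub ht)
  have hc' : c ∈ Icc a c := right_mem_Icc.2 hc.1
  exact (hφpos c (hsub hc')).trans_le <| le_of_supersolution_of_nonneg (hF.mono hsub)
    (restrict hy) (restrict hy') (restrict hφ) (restrict hφ') (restrict hode) (restrict hsuper)
    (restrict hφpos) hya hy'a hy₀ c hc'

end Comparison

theorem comparison_exponential_growth_general
    (t₀ T δ : ℝ)
    (F G μ Y : ℝ → ℝ)
    (hF : ContinuousOn F (Icc t₀ T))
    (hμ : ContDiff ℝ 2 μ)
    (hμpos : ∀ t ∈ Icc t₀ T, 0 < μ t)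
    (hGle : ∀ t ∈ Icc t₀ T,
      G t ≤ -(deriv (deriv μ) t) / μ t - 2 * δ * (deriv μ t / μ t) - δ ^ 2
        - (deriv μ t / μ t + δ) * F t)
    (hY1 : ∀ t ∈ Icc t₀ T, DifferentiableAt ℝ Y t)
    (hY2 : ∀ t ∈ Icc t₀ T, DifferentiableAt ℝ (deriv Y) t)
    (hODE : ∀ t ∈ Icc t₀ T,
      deriv (deriv Y) t + F t * deriv Y t + G t * Y t = 0)
    (hic : Y t₀ = μ t₀ * Real.exp (δ * t₀))
    (hic' : deriv Y t₀ = (deriv μ t₀ + δ * μ t₀) * Real.exp (δ * t₀)) :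
    ∀ t ∈ Icc t₀ T, μ t * Real.exp (δ * t) ≤ Y t := by
  have hμ₁ : Differentiable ℝ μ := hμ.differentiable two_ne_zero
  have hμ₂ : Differentiable ℝ (deriv μ) :=
    (contDiff_succ_iff_deriv.mp hμ).2.2.differentiable one_ne_zero
  refine le_of_supersolution hF (fun t ht => (hY1 t ht).hasDerivAt)
    (fun t ht => (hY2 t ht).hasDerivAt) (fun t _ => (hμ₁ t).hasDerivAt.mul_exp_const_mul δ)
    (fun t _ => ((hμ₂ t).hasDerivAt.fun_add ((hμ₁ t).hasDerivAt.const_mul δ)).mul_exp_const_mul δ)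
    hODE (fun t ht => ?_) (fun t ht => mul_pos (hμpos t ht) (exp_pos _)) hic hic'
  have hμt : 0 < μ t := hμpos t ht
  have h := hGle t ht
  field_simp at h
  linarith [mul_le_mul_of_nonneg_left h (exp_pos (δ * t)).le]

/-- Corollary 1: with comparison function `Φ(t) = μ(t)·exp(δt)`, the coefficient
inequality forces a solution of `Y'' + F·Y' + G·Y = 0` with matching initial data
to grow at least like `μ(t)·exp(δt)` on `I = [t₀, T]`. -/
theorem comparison_exponential_growth
    (t₀ T δ : ℝ) (ht : t₀ < T) (hδ : 0 < δ)
    (F G μ Y : ℝ → ℝ)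
    (hF : ContinuousOn F (Icc t₀ T))
    (hG : ContinuousOn G (Icc t₀ T))
    (hμ : ContDiff ℝ 2 μ)
    (hμpos : ∀ t ∈ Icc t₀ T, 0 < μ t)
    (hGle : ∀ t ∈ Icc t₀ T,
      G t ≤ -(deriv (deriv μ) t) / μ t - 2 * δ * (deriv μ t / μ t) - δ ^ 2
        - (deriv μ t / μ t + δ) * F t)
    (hY1 : ∀ t ∈ Icc t₀ T, DifferentiableAt ℝ Y t)
    (hY2 : ∀ t ∈ Icc t₀ T, DifferentiableAt ℝ (deriv Y) t)
    (hODE : ∀ t ∈ Icc t₀ T,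
      deriv (deriv Y) t + F t * deriv Y t + G t * Y t = 0)
    (hic : Y t₀ = μ t₀ * Real.exp (δ * t₀))
    (hic' : deriv Y t₀ = (deriv μ t₀ + δ * μ t₀) * Real.exp (δ * t₀)) :
    ∀ t ∈ Icc t₀ T, μ t * Real.exp (δ * t) ≤ Y t :=
  comparison_exponential_growth_general t₀ T δ F G μ Y hF hμ hμpos hGle hY1 hY2 hODE hic hic'
end

section
/- Let 0 < t₀ < T, I = [t₀, T], and δ > 0. Let F, G : ℝ → ℝ be continuous on I and μ : ℝ → ℝ twice continuously differentiable with μ(t) > 0 on I. Suppose G(t) ≤ -μ''(t)/μ(t) - 2δ·(μ'(t)/μ(t))·t⁻¹ - δ(δ-1)·t⁻² - (μ'(t)/μ(t) + δ·t⁻¹)·F(t) for all t ∈ I. Then any twice differentiable Y : ℝ → ℝ satisfying Y'' + F(t)Y' + G(t)Y = 0 on I, with Y(t₀) = μ(t₀)·t₀^δ and Y'(t₀) = μ'(t₀)·t₀^δ + δ·μ(t₀)·t₀^(δ-1), satisfies Y(t) ≥ μ(t)·t^δ for all t ∈ I. -/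
open Set Real

/-!
For the Wronskian `W = Φ Y' - Φ' Y` and the integrating factor `E = exp ∫ F`, every solution `Y`
satisfies `(E W)' = -E Y (Φ'' + F Φ' + G Φ)`. The coefficient inequality says exactly that
`Φ = μ t^δ` is a supersolution, so `E W` grows while `Y ≥ 0`; since `W(t₀) = 0`, the ratio `Y / Φ`
then grows from its initial value `1`. Hence `Y ≥ Φ > 0` up to any first zero of `Y`, so there is
none and the comparison holds on all of `[t₀, T]`.
-/

theorem monotoneOn_Icc_of_hasDerivAt_nonneg {a b : ℝ} {f f' : ℝ → ℝ}
    (hf : ∀ t ∈ Icc a b, HasDerivAt f (f' t) t) (hf' : ∀ t ∈ Ioo a b, 0 ≤ f' t) :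
    MonotoneOn f (Icc a b) :=
  monotoneOn_of_hasDerivWithinAt_nonneg (convex_Icc a b)
    (fun t ht => (hf t ht).continuousAt.continuousWithinAt)
    (fun t ht => (hf t (interior_subset ht)).hasDerivWithinAt)
    (fun t ht => hf' t (by rwa [interior_Icc] at ht))

theorem exists_pos_hasDerivAt_eq_mul {a b : ℝ} (hab : a ≤ b) {F : ℝ → ℝ}
    (hF : ContinuousOn F (Icc a b)) :
    ∃ E : ℝ → ℝ, (∀ t, 0 < E t) ∧ ∀ t ∈ Icc a b, HasDerivAt E (E t * F t) t := by
  have hF' : Continuous (IccExtend hab ((Icc a b).domRestrict F)) :=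
    (continuousOn_iff_continuous_domRestrict.mp hF).Icc_extend'
  refine ⟨fun t => exp (∫ s in a..t, IccExtend hab ((Icc a b).domRestrict F) s),
    fun t => exp_pos _, fun t ht => ?_⟩
  have := (hF'.integral_hasStrictDerivAt a t).hasDerivAt.exp
  rwa [IccExtend_of_mem hab _ ht, domRestrict_apply] at this

noncomputable def wronskian (f g : ℝ → ℝ) (t : ℝ) : ℝ := f t * deriv g t - deriv f t * g t

theorem hasDerivAt_wronskian {f g : ℝ → ℝ} {t : ℝ} (hf : DifferentiableAt ℝ f t)
    (hg : DifferentiableAt ℝ g t) (hf' : DifferentiableAt ℝ (deriv f) t)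
    (hg' : DifferentiableAt ℝ (deriv g) t) :
    HasDerivAt (wronskian f g) (f t * deriv (deriv g) t - deriv (deriv f) t * g t) t :=
  ((hf.hasDerivAt.mul hg'.hasDerivAt).sub (hf'.hasDerivAt.mul hg.hasDerivAt)).congr_deriv
    (by ring)

section Comparison

variable {a b : ℝ} {F G Φ Y : ℝ → ℝ}

theorem monotoneOn_div_of_wronskian_nonneg_s3 (hΦpos : ∀ t ∈ Icc a b, 0 < Φ t)
    (hΦ : ∀ t ∈ Icc a b, DifferentiableAt ℝ Φ t) (hY : ∀ t ∈ Icc a b, DifferentiableAt ℝ Y t)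
    (hW : ∀ t ∈ Ioo a b, 0 ≤ wronskian Φ Y t) :
    MonotoneOn (fun t => Y t / Φ t) (Icc a b) :=
  monotoneOn_Icc_of_hasDerivAt_nonneg
    (fun t ht => ((hY t ht).hasDerivAt.div (hΦ t ht).hasDerivAt (hΦpos t ht).ne').congr_deriv
      (show _ = wronskian Φ Y t / Φ t ^ 2 by unfold wronskian; ring))
    (fun t ht => div_nonneg (hW t ht) (sq_nonneg _))

theorem wronskian_nonneg_of_supersolution (hab : a ≤ b) (hF : ContinuousOn F (Icc a b))
    (hΦ : ∀ t ∈ Icc a b, DifferentiableAt ℝ Φ t)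
    (hΦ' : ∀ t ∈ Icc a b, DifferentiableAt ℝ (deriv Φ) t)
    (hY : ∀ t ∈ Icc a b, DifferentiableAt ℝ Y t)
    (hY' : ∀ t ∈ Icc a b, DifferentiableAt ℝ (deriv Y) t)
    (hLΦ : ∀ t ∈ Ioo a b, deriv (deriv Φ) t + F t * deriv Φ t + G t * Φ t ≤ 0)
    (hODE : ∀ t ∈ Ioo a b, deriv (deriv Y) t + F t * deriv Y t + G t * Y t = 0)
    (hYnonneg : ∀ t ∈ Ioo a b, 0 ≤ Y t) (hW₀ : wronskian Φ Y a = 0) :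
    ∀ t ∈ Icc a b, 0 ≤ wronskian Φ Y t := by
  obtain ⟨E, hEpos, hE⟩ := exists_pos_hasDerivAt_eq_mul hab hF
  have hmono : MonotoneOn (fun t => E t * wronskian Φ Y t) (Icc a b) := by
    refine monotoneOn_Icc_of_hasDerivAt_nonneg (fun t ht => (hE t ht).mul
      (hasDerivAt_wronskian (hΦ t ht) (hY t ht) (hΦ' t ht) (hY' t ht))) fun t ht => ?_
    have hkey : E t * F t * wronskian Φ Y t
        + E t * (Φ t * deriv (deriv Y) t - deriv (deriv Φ) t * Y t)
        = E t * Y t * -(deriv (deriv Φ) t + F t * deriv Φ t + G t * Φ t) := by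
      unfold wronskian
      linear_combination E t * Φ t * hODE t ht
    rw [hkey]
    exact mul_nonneg (mul_nonneg (hEpos t).le (hYnonneg t ht)) (neg_nonneg.2 (hLΦ t ht))
  intro t ht
  have h : E a * wronskian Φ Y a ≤ E t * wronskian Φ Y t := hmono (left_mem_Icc.2 hab) ht ht.1
  rw [hW₀, mul_zero] at h
  exact nonneg_of_mul_nonneg_right h (hEpos t)

theorem le_of_supersolution_of_nonneg_s3 (hab : a ≤ b) (hF : ContinuousOn F (Icc a b))
    (hΦpos : ∀ t ∈ Icc a b, 0 < Φ t)
    (hΦ : ∀ t ∈ Icc a b, DifferentiableAt ℝ Φ t)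
    (hΦ' : ∀ t ∈ Icc a b, DifferentiableAt ℝ (deriv Φ) t)
    (hY : ∀ t ∈ Icc a b, DifferentiableAt ℝ Y t)
    (hY' : ∀ t ∈ Icc a b, DifferentiableAt ℝ (deriv Y) t)
    (hLΦ : ∀ t ∈ Ioo a b, deriv (deriv Φ) t + F t * deriv Φ t + G t * Φ t ≤ 0)
    (hODE : ∀ t ∈ Ioo a b, deriv (deriv Y) t + F t * deriv Y t + G t * Y t = 0)
    (hYnonneg : ∀ t ∈ Ioo a b, 0 ≤ Y t) (hic : Y a = Φ a) (hic' : deriv Y a = deriv Φ a) :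
    ∀ t ∈ Icc a b, Φ t ≤ Y t := by
  have hW : ∀ t ∈ Icc a b, 0 ≤ wronskian Φ Y t :=
    wronskian_nonneg_of_supersolution hab hF hΦ hΦ' hY hY' hLΦ hODE hYnonneg
      (by rw [wronskian, hic, hic']; ring)
  have hmono := monotoneOn_div_of_wronskian_nonneg_s3 hΦpos hΦ hY fun t ht =>
    hW t (Ioo_subset_Icc_self ht)
  intro t ht
  have h : Y a / Φ a ≤ Y t / Φ t := hmono (left_mem_Icc.2 hab) ht ht.1
  rwa [hic, div_self (hΦpos a (left_mem_Icc.2 hab)).ne', one_le_div (hΦpos t ht)] at h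

theorem le_of_supersolution_s3 (hab : a ≤ b) (hF : ContinuousOn F (Icc a b))
    (hΦpos : ∀ t ∈ Icc a b, 0 < Φ t)
    (hΦ : ∀ t ∈ Icc a b, DifferentiableAt ℝ Φ t)
    (hΦ' : ∀ t ∈ Icc a b, DifferentiableAt ℝ (deriv Φ) t)
    (hY : ∀ t ∈ Icc a b, DifferentiableAt ℝ Y t)
    (hY' : ∀ t ∈ Icc a b, DifferentiableAt ℝ (deriv Y) t)
    (hLΦ : ∀ t ∈ Ioo a b, deriv (deriv Φ) t + F t * deriv Φ t + G t * Φ t ≤ 0)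
    (hODE : ∀ t ∈ Ioo a b, deriv (deriv Y) t + F t * deriv Y t + G t * Y t = 0)
    (hic : Y a = Φ a) (hic' : deriv Y a = deriv Φ a) :
    ∀ t ∈ Icc a b, Φ t ≤ Y t := by
  have hcomp : ∀ c ∈ Icc a b, (∀ t ∈ Ioo a c, 0 ≤ Y t) → ∀ t ∈ Icc a c, Φ t ≤ Y t := by
    intro c hc hYc
    have hsub : Icc a c ⊆ Icc a b := Icc_subset_Icc_right hc.2
    have hsubo : Ioo a c ⊆ Ioo a b := Ioo_subset_Ioo_right hc.2
    exact le_of_supersolution_of_nonneg_s3 hc.1 (hF.mono hsub) (fun t ht => hΦpos t (hsub ht))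
      (fun t ht => hΦ t (hsub ht)) (fun t ht => hΦ' t (hsub ht)) (fun t ht => hY t (hsub ht))
      (fun t ht => hY' t (hsub ht)) (fun t ht => hLΦ t (hsubo ht))
      (fun t ht => hODE t (hsubo ht)) hYc hic hic'
  suffices hYpos : ∀ t ∈ Icc a b, 0 < Y t from
    hcomp b (right_mem_Icc.2 hab) fun t ht => (hYpos t (Ioo_subset_Icc_self ht)).le
  by_contra! hzero
  have hK : IsCompact (Icc a b ∩ Y ⁻¹' Iic 0) :=
    isCompact_Icc.of_isClosed_subset ((ContinuousOn.preimage_isClosed_of_isClosed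
      (fun t ht => (hY t ht).continuousAt.continuousWithinAt) isClosed_Icc isClosed_Iic))
      inter_subset_left
  obtain ⟨c, ⟨hc, hYc⟩, hfirst⟩ := hK.exists_isLeast hzero
  have hYnonneg : ∀ t ∈ Ioo a c, 0 ≤ Y t := fun t ht =>
    le_of_lt <| not_le.1 fun hYt => (hfirst ⟨⟨ht.1.le, ht.2.le.trans hc.2⟩, hYt⟩).not_gt ht.2
  have hΦY := hcomp c hc hYnonneg c (right_mem_Icc.2 hc.1)
  exact (hΦpos c hc).not_ge (hΦY.trans hYc)

end Comparison

section MulRpow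

variable {μ : ℝ → ℝ} {δ t : ℝ}

theorem hasDerivAt_mul_rpow (hμ : DifferentiableAt ℝ μ t) (ht : 0 < t) :
    HasDerivAt (fun s => μ s * s ^ δ) (deriv μ t * t ^ δ + δ * μ t * t ^ (δ - 1)) t :=
  (hμ.hasDerivAt.mul (hasDerivAt_rpow_const (Or.inl ht.ne'))).congr_deriv (by ring)

theorem hasDerivAt_deriv_mul_rpow (hμ : Differentiable ℝ μ)
    (hμ' : DifferentiableAt ℝ (deriv μ) t) (ht : 0 < t) :
    HasDerivAt (deriv fun s => μ s * s ^ δ) (deriv (deriv μ) t * t ^ δ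
      + 2 * δ * deriv μ t * t ^ (δ - 1) + δ * (δ - 1) * μ t * t ^ (δ - 2)) t := by
  have hderiv : (deriv fun s => μ s * s ^ δ) =ᶠ[nhds t]
      fun s => deriv μ s * s ^ δ + δ * (μ s * s ^ (δ - 1)) := by
    filter_upwards [Ioi_mem_nhds ht] with s hs
    rw [(hasDerivAt_mul_rpow (hμ s) hs).deriv, mul_assoc]
  refine (((hasDerivAt_mul_rpow hμ' ht).add
    ((hasDerivAt_mul_rpow (δ := δ - 1) (hμ t) ht).const_mul δ)).congr_of_eventuallyEq
    hderiv).congr_deriv ?_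
  rw [sub_sub, one_add_one_eq_two]
  ring

theorem mul_rpow_supersolution (hμ : ContDiff ℝ 2 μ) (ht : 0 < t) (hμt : 0 < μ t) {f g : ℝ}
    (hg : g ≤ -(deriv (deriv μ) t) / μ t - 2 * δ * (deriv μ t / μ t) * t⁻¹
        - δ * (δ - 1) * (t ^ 2)⁻¹ - (deriv μ t / μ t + δ * t⁻¹) * f) :
    deriv (deriv fun s => μ s * s ^ δ) t + f * deriv (fun s => μ s * s ^ δ) t
      + g * (μ t * t ^ δ) ≤ 0 := by
  have hμ₁ : Differentiable ℝ μ := hμ.differentiable (by norm_num)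
  rw [(hasDerivAt_deriv_mul_rpow hμ₁ (hμ.differentiable_deriv_two t) ht).deriv,
    (hasDerivAt_mul_rpow (hμ₁ t) ht).deriv, rpow_sub_one ht.ne',
    rpow_sub ht, rpow_two]
  have hexpand : deriv (deriv μ) t * t ^ δ + 2 * δ * deriv μ t * (t ^ δ / t)
      + δ * (δ - 1) * μ t * (t ^ δ / t ^ 2) + f * (deriv μ t * t ^ δ + δ * μ t * (t ^ δ / t))
      + g * (μ t * t ^ δ)
      = μ t * t ^ δ * (g - (-(deriv (deriv μ) t) / μ t - 2 * δ * (deriv μ t / μ t) * t⁻¹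
        - δ * (δ - 1) * (t ^ 2)⁻¹ - (deriv μ t / μ t + δ * t⁻¹) * f)) := by
    field_simp
    ring
  rw [hexpand]
  exact mul_nonpos_of_nonneg_of_nonpos (by positivity) (sub_nonpos.2 hg)

end MulRpow

theorem comparison_algebraic_growth_general
    (t₀ T δ : ℝ) (ht₀ : 0 < t₀) (ht : t₀ < T)
    (F G μ Y : ℝ → ℝ)
    (hF : ContinuousOn F (Icc t₀ T))
    (hμ : ContDiff ℝ 2 μ)
    (hμpos : ∀ t ∈ Icc t₀ T, 0 < μ t)
    (hGle : ∀ t ∈ Icc t₀ T,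
      G t ≤ -(deriv (deriv μ) t) / μ t - 2 * δ * (deriv μ t / μ t) * t⁻¹
        - δ * (δ - 1) * (t ^ 2)⁻¹ - (deriv μ t / μ t + δ * t⁻¹) * F t)
    (hY1 : ∀ t ∈ Icc t₀ T, DifferentiableAt ℝ Y t)
    (hY2 : ∀ t ∈ Icc t₀ T, DifferentiableAt ℝ (deriv Y) t)
    (hODE : ∀ t ∈ Icc t₀ T,
      deriv (deriv Y) t + F t * deriv Y t + G t * Y t = 0)
    (hic : Y t₀ = μ t₀ * t₀ ^ δ)
    (hic' : deriv Y t₀ = deriv μ t₀ * t₀ ^ δ + δ * μ t₀ * t₀ ^ (δ - 1)) :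
    ∀ t ∈ Icc t₀ T, μ t * t ^ δ ≤ Y t := by
  have hμ₁ : Differentiable ℝ μ := hμ.differentiable (by norm_num)
  have hpos : ∀ t ∈ Icc t₀ T, 0 < t := fun t ht => ht₀.trans_le ht.1
  refine le_of_supersolution_s3 (Φ := fun t => μ t * t ^ δ) ht.le hF
    (fun t ht => mul_pos (hμpos t ht) (rpow_pos_of_pos (hpos t ht) δ))
    (fun t ht => (hasDerivAt_mul_rpow (hμ₁ t) (hpos t ht)).differentiableAt)
    (fun t ht => (hasDerivAt_deriv_mul_rpow hμ₁ (hμ.differentiable_deriv_two t)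
      (hpos t ht)).differentiableAt)
    hY1 hY2
    (fun t ht => mul_rpow_supersolution hμ (hpos t (Ioo_subset_Icc_self ht))
      (hμpos t (Ioo_subset_Icc_self ht)) (hGle t (Ioo_subset_Icc_self ht)))
    (fun t ht => hODE t (Ioo_subset_Icc_self ht)) hic ?_
  rw [hic', (hasDerivAt_mul_rpow (hμ₁ t₀) ht₀).deriv]

/-- Corollary 2: with comparison function `Φ(t) = μ(t)·t^δ` (real power), the
coefficient inequality forces a solution of `Y'' + F·Y' + G·Y = 0` with matching
initial data to grow at least like `μ(t)·t^δ` on `I = [t₀, T]`, `t₀ > 0`. -/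
theorem comparison_algebraic_growth
    (t₀ T δ : ℝ) (ht₀ : 0 < t₀) (ht : t₀ < T) (hδ : 0 < δ)
    (F G μ Y : ℝ → ℝ)
    (hF : ContinuousOn F (Icc t₀ T))
    (hG : ContinuousOn G (Icc t₀ T))
    (hμ : ContDiff ℝ 2 μ)
    (hμpos : ∀ t ∈ Icc t₀ T, 0 < μ t)
    (hGle : ∀ t ∈ Icc t₀ T,
      G t ≤ -(deriv (deriv μ) t) / μ t - 2 * δ * (deriv μ t / μ t) * t⁻¹
        - δ * (δ - 1) * (t ^ 2)⁻¹ - (deriv μ t / μ t + δ * t⁻¹) * F t)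
    (hY1 : ∀ t ∈ Icc t₀ T, DifferentiableAt ℝ Y t)
    (hY2 : ∀ t ∈ Icc t₀ T, DifferentiableAt ℝ (deriv Y) t)
    (hODE : ∀ t ∈ Icc t₀ T,
      deriv (deriv Y) t + F t * deriv Y t + G t * Y t = 0)
    (hic : Y t₀ = μ t₀ * t₀ ^ δ)
    (hic' : deriv Y t₀ = deriv μ t₀ * t₀ ^ δ + δ * μ t₀ * t₀ ^ (δ - 1)) :
    ∀ t ∈ Icc t₀ T, μ t * t ^ δ ≤ Y t :=
  comparison_algebraic_growth_general t₀ T δ ht₀ ht F G μ Y hF hμ hμpos hGle hY1 hY2 hODE hic hic'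
end

section
/- Let t₀ < T and I = [t₀, T]. Let d₁, d₂ > 0, let ρ : ℝ → ℝ be continuously differentiable on I, let μ : ℝ → ℝ be twice continuously differentiable with μ(t) > 0 on I, and let J₁₁, J₁₂, J₂₁, J₂₂ : ℝ → ℝ be continuously differentiable on I with J₁₂(t) ≠ 0 for all t ∈ I. Write det J = J₁₁J₂₂ - J₁₂J₂₁ and tr J = J₁₁ + J₂₂. Suppose that for all t ∈ I: det J(t) - (d₂J₁₁(t) + d₁J₂₂(t))ρ(t) + d₁d₂ρ(t)² < -μ''(t)/μ(t) - (μ'(t)/μ(t))·[(d₁+d₂)ρ(t) - tr J(t) - J₁₂'(t)/J₁₂(t)] - J₁₂(t)·(d/dt)((d₁ρ(t) - J₁₁(t))/J₁₂(t)). Then any differentiable pair V₁, V₂ : ℝ → ℝ satisfying V₁' = -d₁ρ(t)V₁ + J₁₁(t)V₁ + J₁₂(t)V₂ and V₂' = -d₂ρ(t)V₂ + J₂₁(t)V₁ + J₂₂(t)V₂ on I, with V₁(t₀) = μ(t₀) and -d₁ρ(t₀)μ(t₀) + J₁₁(t₀)μ(t₀) + J₁₂(t₀)V₂(t₀) = μ'(t₀),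 satisfies V₁(t) ≥ μ(t) for all t ∈ I. -/
/-!
Write `V₁' = a V₁ + b V₂` and `V₂' = g V₁ + e V₂` with `a = J₁₁ - d₁ρ`, `b = J₁₂`,
`g = J₂₁`, `e = J₂₂ - d₂ρ`. Eliminating `V₂ = (V₁' - a V₁) / b` shows that `V₁` solves
`V₁'' = p V₁' + q V₁` with `p = a + e + b'/b` and `q = b (a/b)' + b g - a e`, so the
Wronskian `W = V₁' μ - V₁ μ'` of `V₁` and `μ` satisfies `W' = p W + c V₁` with
`c = p μ' + q μ - μ''`; the hypothesis on `J` is exactly `c / μ > 0`.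
Since `(V₁/μ)' = W/μ²` and `W(t₀) = 0`, `V₁(t₀) = μ(t₀)`, as long as `W ≥ 0` we have
`V₁ ≥ μ > 0`, so at a zero of `W` its derivative `c V₁` is positive and `W` cannot become
negative. Hence `W ≥ 0` on the whole interval, `V₁/μ` is nondecreasing, and `V₁ ≥ μ`.
-/

open Set Filter Topology

theorem HasDerivAt.eventually_nhdsGT_pos {f : ℝ → ℝ} {f' x : ℝ} (hf : HasDerivAt f f' x)
    (hx : f x = 0) (hf' : 0 < f') : ∀ᶠ y in 𝓝[>] x, 0 < f y := by
  have hsign := eventually_nhdsWithin_sign_eq_of_deriv_pos (hf.deriv ▸ hf') hx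
  filter_upwards [nhdsWithin_le_nhds hsign, self_mem_nhdsWithin] with y hy hxy
  rwa [sign_pos (sub_pos.mpr hxy), sign_eq_one_iff] at hy

section Wronskian

variable {V V' μ μ' : ℝ → ℝ}

theorem monotoneOn_div_of_wronskian_nonneg_s7 {D : Set ℝ} (hD : Convex ℝ D)
    (hV : ∀ x ∈ D, HasDerivAt V (V' x) x) (hμ : ∀ x ∈ D, HasDerivAt μ (μ' x) x)
    (hμ0 : ∀ x ∈ D, μ x ≠ 0) (hW : ∀ x ∈ D, 0 ≤ V' x * μ x - V x * μ' x) :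
    MonotoneOn (fun x => V x / μ x) D := by
  have hdiv : ∀ x ∈ D, HasDerivAt (fun y => V y / μ y)
      ((V' x * μ x - V x * μ' x) / μ x ^ 2) x :=
    fun x hx => (hV x hx).div (hμ x hx) (hμ0 x hx)
  exact monotoneOn_of_hasDerivWithinAt_nonneg hD
    (fun x hx => (hdiv x hx).continuousAt.continuousWithinAt)
    (fun x hx => (hdiv x (interior_subset hx)).hasDerivWithinAt)
    (fun x hx => div_nonneg (hW x (interior_subset hx)) (sq_nonneg _))

theorem le_of_wronskian_nonneg_s7 {a b : ℝ}
    (hV : ∀ x ∈ Icc a b, HasDerivAt V (V' x) x) (hμ : ∀ x ∈ Icc a b, HasDerivAt μ (μ' x) x)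
    (hμpos : ∀ x ∈ Icc a b, 0 < μ x) (hW : ∀ x ∈ Icc a b, 0 ≤ V' x * μ x - V x * μ' x)
    (ha : μ a ≤ V a) : ∀ x ∈ Icc a b, μ x ≤ V x := by
  intro x hx
  have haI : a ∈ Icc a b := ⟨le_rfl, hx.1.trans hx.2⟩
  have hmono := monotoneOn_div_of_wronskian_nonneg_s7 (convex_Icc a b) hV hμ
    (fun y hy => (hμpos y hy).ne') hW haI hx hx.1
  exact (one_le_div (hμpos x hx)).mp (((one_le_div (hμpos a haI)).mpr ha).trans hmono)

theorem le_of_hasDerivAt_wronskian {a b : ℝ} {W p c : ℝ → ℝ}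
    (hV : ∀ x ∈ Icc a b, HasDerivAt V (V' x) x) (hμ : ∀ x ∈ Icc a b, HasDerivAt μ (μ' x) x)
    (hμpos : ∀ x ∈ Icc a b, 0 < μ x)
    (hWeq : ∀ x ∈ Icc a b, W x = V' x * μ x - V x * μ' x)
    (hW : ∀ x ∈ Icc a b, HasDerivAt W (p x * W x + c x * V x) x)
    (hc : ∀ x ∈ Icc a b, 0 < c x) (hWa : 0 ≤ W a) (hVa : μ a ≤ V a) :
    ∀ x ∈ Icc a b, μ x ≤ V x := by
  have hWnonneg : Icc a b ⊆ {x | 0 ≤ W x} := by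
    refine IsClosed.Icc_subset_of_forall_mem_nhdsGT_of_Icc_subset ?_ hWa
      fun t ht hprefix => ?_
    · rw [inter_comm]
      exact ContinuousOn.preimage_isClosed_of_isClosed
        (fun x hx => (hW x hx).continuousAt.continuousWithinAt) isClosed_Icc isClosed_Ici
    have htI : t ∈ Icc a b := Ico_subset_Icc_self ht
    have hsub : Icc a t ⊆ Icc a b := Icc_subset_Icc_right ht.2.le
    have hVt : μ t ≤ V t :=
      le_of_wronskian_nonneg_s7 (fun x hx => hV x (hsub hx)) (fun x hx => hμ x (hsub hx))
        (fun x hx => hμpos x (hsub hx)) (fun x hx => hWeq x (hsub hx) ▸ hprefix hx) hVa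
        t ⟨ht.1, le_rfl⟩
    rcases (show 0 ≤ W t from hprefix ⟨ht.1, le_rfl⟩).eq_or_lt with hzero | hpos
    · have hderiv : 0 < p t * W t + c t * V t := by
        rw [← hzero, mul_zero, zero_add]
        exact mul_pos (hc t htI) ((hμpos t htI).trans_le hVt)
      filter_upwards [(hW t htI).eventually_nhdsGT_pos hzero.symm hderiv] with x hx
        using hx.le
    · filter_upwards [nhdsWithin_le_nhds ((hW t htI).continuousAt.eventually (lt_mem_nhds hpos))]
        with x hx using hx.le
  exact le_of_wronskian_nonneg_s7 hV hμ hμpos (fun x hx => hWeq x hx ▸ hWnonneg hx) hVa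

end Wronskian

theorem hasDerivAt_linear_system_fst_rhs {a b g e V₁ V₂ : ℝ → ℝ} {a' b' t : ℝ}
    (ha : HasDerivAt a a' t) (hb : HasDerivAt b b' t) (hbt : b t ≠ 0)
    (hV₁ : HasDerivAt V₁ (a t * V₁ t + b t * V₂ t) t)
    (hV₂ : HasDerivAt V₂ (g t * V₁ t + e t * V₂ t) t) :
    HasDerivAt (fun s => a s * V₁ s + b s * V₂ s)
      ((a t + e t + b' / b t) * (a t * V₁ t + b t * V₂ t)
        + (a' - a t * b' / b t + b t * g t - a t * e t) * V₁ t) t :=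
  ((ha.mul hV₁).add (hb.mul hV₂)).congr_deriv (by field_simp; ring)

theorem hasDerivAt_wronskian_of_second_order {X V μ μ' : ℝ → ℝ} {p q μ'' t : ℝ}
    (hX : HasDerivAt X (p * X t + q * V t) t) (hV : HasDerivAt V (X t) t)
    (hμ : HasDerivAt μ (μ' t) t) (hμ' : HasDerivAt μ' μ'' t) :
    HasDerivAt (fun s => X s * μ s - V s * μ' s)
      (p * (X t * μ t - V t * μ' t) + (p * μ' t + q * μ t - μ'') * V t) t :=
  ((hX.mul hμ).sub (hV.mul hμ')).congr_deriv (by ring)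

theorem turing_instability_J12_branch_general
    (t₀ T : ℝ)
    (d₁ d₂ : ℝ)
    (ρ μ J₁₁ J₁₂ J₂₁ J₂₂ V₁ V₂ : ℝ → ℝ)
    (hρd : ∀ t ∈ Icc t₀ T, DifferentiableAt ℝ ρ t)
    (hμ : ContDiff ℝ 2 μ)
    (hμpos : ∀ t ∈ Icc t₀ T, 0 < μ t)
    (hJ₁₁d : ∀ t ∈ Icc t₀ T, DifferentiableAt ℝ J₁₁ t)
    (hJ₁₂d : ∀ t ∈ Icc t₀ T, DifferentiableAt ℝ J₁₂ t)
    (hJ₁₂ne : ∀ t ∈ Icc t₀ T, J₁₂ t ≠ 0)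
    (hineq : ∀ t ∈ Icc t₀ T,
      J₁₁ t * J₂₂ t - J₁₂ t * J₂₁ t - (d₂ * J₁₁ t + d₁ * J₂₂ t) * ρ t
          + d₁ * d₂ * (ρ t) ^ 2
        < -(deriv (deriv μ) t) / μ t
          - (deriv μ t / μ t)
            * ((d₁ + d₂) * ρ t - (J₁₁ t + J₂₂ t) - deriv J₁₂ t / J₁₂ t)
          - J₁₂ t * deriv (fun s => (d₁ * ρ s - J₁₁ s) / J₁₂ s) t)
    (hV₁d : ∀ t ∈ Icc t₀ T, DifferentiableAt ℝ V₁ t)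
    (hV₂d : ∀ t ∈ Icc t₀ T, DifferentiableAt ℝ V₂ t)
    (hODE₁ : ∀ t ∈ Icc t₀ T,
      deriv V₁ t = -(d₁ * ρ t) * V₁ t + J₁₁ t * V₁ t + J₁₂ t * V₂ t)
    (hODE₂ : ∀ t ∈ Icc t₀ T,
      deriv V₂ t = -(d₂ * ρ t) * V₂ t + J₂₁ t * V₁ t + J₂₂ t * V₂ t)
    (hic : V₁ t₀ = μ t₀)
    (hic' : -(d₁ * ρ t₀) * μ t₀ + J₁₁ t₀ * μ t₀ + J₁₂ t₀ * V₂ t₀ = deriv μ t₀) :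
    ∀ t ∈ Icc t₀ T, μ t ≤ V₁ t := by
  have hμ₁ : Differentiable ℝ μ := hμ.differentiable (by norm_num)
  have hμ₂ : Differentiable ℝ (deriv μ) :=
    (contDiff_succ_iff_deriv (n := 1).mp hμ).2.2.differentiable (by norm_num)
  have hV₁ : ∀ t ∈ Icc t₀ T,
      HasDerivAt V₁ ((J₁₁ t - d₁ * ρ t) * V₁ t + J₁₂ t * V₂ t) t := fun t ht =>
    (hV₁d t ht).hasDerivAt.congr_deriv (by rw [hODE₁ t ht]; ring)
  have hV₂ : ∀ t ∈ Icc t₀ T,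
      HasDerivAt V₂ (J₂₁ t * V₁ t + (J₂₂ t - d₂ * ρ t) * V₂ t) t := fun t ht =>
    (hV₂d t ht).hasDerivAt.congr_deriv (by rw [hODE₂ t ht]; ring)
  refine le_of_hasDerivAt_wronskian (fun t ht => (hV₁d t ht).hasDerivAt)
    (fun t _ => (hμ₁ t).hasDerivAt) hμpos
    (W := fun s => ((J₁₁ s - d₁ * ρ s) * V₁ s + J₁₂ s * V₂ s) * μ s - V₁ s * deriv μ s)
    (fun t ht => by rw [hODE₁ t ht]; ring)
    (fun t ht => hasDerivAt_wronskian_of_second_order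
      (hasDerivAt_linear_system_fst_rhs (g := J₂₁) (e := fun s => J₂₂ s - d₂ * ρ s)
        ((hJ₁₁d t ht).hasDerivAt.sub ((hρd t ht).hasDerivAt.const_mul d₁))
        (hJ₁₂d t ht).hasDerivAt (hJ₁₂ne t ht) (hV₁ t ht) (hV₂ t ht))
      (hV₁ t ht) (hμ₁ t).hasDerivAt (hμ₂ t).hasDerivAt)
    (fun t ht => ?_) (le_of_eq (by rw [hic, ← hic']; ring)) hic.ge
  have hquot : HasDerivAt (fun s => (d₁ * ρ s - J₁₁ s) / J₁₂ s) _ t :=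
    (((hρd t ht).hasDerivAt.const_mul d₁).sub (hJ₁₁d t ht).hasDerivAt).div
      (hJ₁₂d t ht).hasDerivAt (hJ₁₂ne t ht)
  have hμt := hμpos t ht
  have hJt := hJ₁₂ne t ht
  -- the coefficient of `V₁ t` in `W'` is `μ t` times the gap in `hineq t ht`
  refine (mul_pos hμt (sub_pos.mpr (hineq t ht))).trans_eq ?_
  rw [hquot.deriv, Pi.sub_apply]
  field_simp
  ring

/-- Theorem 3, first branch (the J₁₂-branch, inequality (T31)): generalized
Turing instability condition for a two-species reaction-diffusion system on an
evolving domain. Under the differential inequality, the component `V₁` of the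
linearized perturbation grows at least as fast as the volume factor `μ`. -/
theorem turing_instability_J12_branch
    (t₀ T : ℝ) (ht : t₀ < T)
    (d₁ d₂ : ℝ) (hd₁ : 0 < d₁) (hd₂ : 0 < d₂)
    (ρ μ J₁₁ J₁₂ J₂₁ J₂₂ V₁ V₂ : ℝ → ℝ)
    (hρd : ∀ t ∈ Icc t₀ T, DifferentiableAt ℝ ρ t)
    (hρc : ContinuousOn (deriv ρ) (Icc t₀ T))
    (hμ : ContDiff ℝ 2 μ)
    (hμpos : ∀ t ∈ Icc t₀ T, 0 < μ t)
    (hJ₁₁d : ∀ t ∈ Icc t₀ T, DifferentiableAt ℝ J₁₁ t)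
    (hJ₁₁c : ContinuousOn (deriv J₁₁) (Icc t₀ T))
    (hJ₁₂d : ∀ t ∈ Icc t₀ T, DifferentiableAt ℝ J₁₂ t)
    (hJ₁₂c : ContinuousOn (deriv J₁₂) (Icc t₀ T))
    (hJ₂₁d : ∀ t ∈ Icc t₀ T, DifferentiableAt ℝ J₂₁ t)
    (hJ₂₁c : ContinuousOn (deriv J₂₁) (Icc t₀ T))
    (hJ₂₂d : ∀ t ∈ Icc t₀ T, DifferentiableAt ℝ J₂₂ t)
    (hJ₂₂c : ContinuousOn (deriv J₂₂) (Icc t₀ T))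
    (hJ₁₂ne : ∀ t ∈ Icc t₀ T, J₁₂ t ≠ 0)
    (hineq : ∀ t ∈ Icc t₀ T,
      J₁₁ t * J₂₂ t - J₁₂ t * J₂₁ t - (d₂ * J₁₁ t + d₁ * J₂₂ t) * ρ t
          + d₁ * d₂ * (ρ t) ^ 2
        < -(deriv (deriv μ) t) / μ t
          - (deriv μ t / μ t)
            * ((d₁ + d₂) * ρ t - (J₁₁ t + J₂₂ t) - deriv J₁₂ t / J₁₂ t)
          - J₁₂ t * deriv (fun s => (d₁ * ρ s - J₁₁ s) / J₁₂ s) t)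
    (hV₁d : ∀ t ∈ Icc t₀ T, DifferentiableAt ℝ V₁ t)
    (hV₂d : ∀ t ∈ Icc t₀ T, DifferentiableAt ℝ V₂ t)
    (hODE₁ : ∀ t ∈ Icc t₀ T,
      deriv V₁ t = -(d₁ * ρ t) * V₁ t + J₁₁ t * V₁ t + J₁₂ t * V₂ t)
    (hODE₂ : ∀ t ∈ Icc t₀ T,
      deriv V₂ t = -(d₂ * ρ t) * V₂ t + J₂₁ t * V₁ t + J₂₂ t * V₂ t)
    (hic : V₁ t₀ = μ t₀)
    (hic' : -(d₁ * ρ t₀) * μ t₀ + J₁₁ t₀ * μ t₀ + J₁₂ t₀ * V₂ t₀ = deriv μ t₀) :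
    ∀ t ∈ Icc t₀ T, μ t ≤ V₁ t :=
  turing_instability_J12_branch_general t₀ T d₁ d₂ ρ μ J₁₁ J₁₂ J₂₁ J₂₂ V₁ V₂ hρd hμ hμpos hJ₁₁d
    hJ₁₂d hJ₁₂ne hineq hV₁d hV₂d hODE₁ hODE₂ hic hic'
end

section
/- Let t₀ < T and I = [t₀, T]. Let d₁, d₂ > 0, let ρ : ℝ → ℝ be continuously differentiable on I, let μ : ℝ → ℝ be twice continuously differentiable with μ(t) > 0 on I, and let J₁₁, J₁₂, J₂₁, J₂₂ : ℝ → ℝ be continuously differentiable on I with J₂₁(t) ≠ 0 for all t ∈ I. Write det J = J₁₁J₂₂ - J₁₂J₂₁ and tr J = J₁₁ + J₂₂. Suppose that for all t ∈ I: det J(t) - (d₂J₁₁(t) + d₁J₂₂(t))ρ(t) + d₁d₂ρ(t)² < -μ''(t)/μ(t) - (μ'(t)/μ(t))·[(d₁+d₂)ρ(t) - tr J(t) - J₂₁'(t)/J₂₁(t)] - J₂₁(t)·(d/dt)((d₂ρ(t) - J₂₂(t))/J₂₁(t)). Then any differentiable pair V₁, V₂ : ℝ → ℝ satisfying V₁'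 = -d₁ρ(t)V₁ + J₁₁(t)V₁ + J₁₂(t)V₂ and V₂' = -d₂ρ(t)V₂ + J₂₁(t)V₁ + J₂₂(t)V₂ on I, with V₂(t₀) = μ(t₀) and -d₂ρ(t₀)μ(t₀) + J₂₁(t₀)V₁(t₀) + J₂₂(t₀)μ(t₀) = μ'(t₀), satisfies V₂(t) ≥ μ(t) for all t ∈ I. -/
open Set Filter Topology

/-!
Put `u = V₂ / μ` and `W = V₂' μ - V₂ μ'`, so that `u' = W / μ²`. Differentiating `W` along the
system and eliminating `V₁` with the equation for `V₂` gives `W' = a W + μ V₂ δ`, where `δ > 0`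
is the slack in the hypothesis. Since `u = 1` and `W = 0` at `t₀`, the region `{u ≥ 1, W ≥ 0}`
cannot be left: on the part `W = 0` of its boundary, `W' = μ V₂ δ > 0`.
-/

theorem HasDerivAt.eventually_nhdsGT_lt {f : ℝ → ℝ} {f' x : ℝ} (hf : HasDerivAt f f' x)
    (hf' : 0 < f') : ∀ᶠ y in 𝓝[>] x, f x < f y := by
  have hslope : Tendsto (slope f x) (𝓝[>] x) (𝓝 f') :=
    (hasDerivWithinAt_iff_tendsto_slope' (lt_irrefl x)).1 hf.hasDerivWithinAt
  filter_upwards [hslope.eventually (eventually_gt_nhds hf'), self_mem_nhdsWithin] with y hy hxy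
  exact (slope_pos_iff_of_le (le_of_lt hxy)).1 hy

theorem le_and_nonneg_of_deriv_pos_of_eq_zero {u u' w w' : ℝ → ℝ} {a b c : ℝ}
    (hu : ∀ t ∈ Icc a b, HasDerivAt u (u' t) t) (hw : ∀ t ∈ Icc a b, HasDerivAt w (w' t) t)
    (hu' : ∀ t ∈ Icc a b, 0 < w t → 0 ≤ u' t)
    (hw' : ∀ t ∈ Icc a b, c ≤ u t → w t = 0 → 0 < w' t)
    (hua : c ≤ u a) (hwa : 0 ≤ w a) {t : ℝ} (ht : t ∈ Icc a b) :
    c ≤ u t ∧ 0 ≤ w t := by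
  have hcu : ContinuousOn u (Icc a b) := fun t ht => (hu t ht).continuousAt.continuousWithinAt
  have hcw : ContinuousOn w (Icc a b) := fun t ht => (hw t ht).continuousAt.continuousWithinAt
  have hclosed : IsClosed ({t | c ≤ u t ∧ 0 ≤ w t} ∩ Icc a b) := by
    have := (hcu.prodMk hcw).preimage_isClosed_of_isClosed isClosed_Icc
      ((isClosed_Ici (a := c)).prod (isClosed_Ici (a := 0)))
    rwa [inter_comm] at this
  refine IsClosed.Icc_subset_of_forall_mem_nhdsWithin hclosed ⟨hua, hwa⟩ ?_ ht
  rintro x ⟨⟨hux, hwx⟩, hxI⟩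
  have hxI' : x ∈ Icc a b := Ico_subset_Icc_self hxI
  have hw_pos : ∀ᶠ y in 𝓝[>] x, 0 < w y := by
    rcases hwx.eq_or_lt with hw0 | hwx_pos
    · simpa only [← hw0] using (hw x hxI').eventually_nhdsGT_lt (hw' x hxI' hux hw0.symm)
    · exact nhdsWithin_le_nhds ((hw x hxI').continuousAt.eventually (eventually_gt_nhds hwx_pos))
  obtain ⟨m, hxm, hm⟩ := mem_nhdsGT_iff_exists_Ioo_subset.1
    (hw_pos.and (Ioo_mem_nhdsGT hxI.2))
  refine mem_of_superset (Ioo_mem_nhdsGT hxm) fun y hy => ?_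
  have hsub : Icc x y ⊆ Icc a b := Icc_subset_Icc hxI.1 (hm hy).2.2.le
  have hmono : MonotoneOn u (Icc x y) := by
    refine monotoneOn_of_deriv_nonneg (convex_Icc x y) (hcu.mono hsub) ?_ ?_ <;>
      rw [interior_Icc] <;> intro z hz
    · exact (hu z (hsub (Ioo_subset_Icc_self hz))).differentiableAt.differentiableWithinAt
    · rw [(hu z (hsub (Ioo_subset_Icc_self hz))).deriv]
      exact hu' z (hsub (Ioo_subset_Icc_self hz)) (hm ⟨hz.1, hz.2.trans hy.2⟩).1
  exact ⟨hux.trans (hmono (left_mem_Icc.2 hy.1.le) (right_mem_Icc.2 hy.1.le) hy.1.le),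
    (hm hy).1.le⟩

noncomputable section TuringSystem

variable (d₁ d₂ : ℝ) (ρ μ J₁₁ J₁₂ J₂₁ J₂₂ V₁ V₂ : ℝ → ℝ)

/-- `V₂' μ - V₂ μ'` with `V₂'` replaced by the right-hand side of its equation, so that it stays
differentiable at the endpoints of the interval. -/
def turingWronskian (t : ℝ) : ℝ :=
  (-(d₂ * ρ t) * V₂ t + J₂₁ t * V₁ t + J₂₂ t * V₂ t) * μ t - V₂ t * deriv μ t

def turingSlack (t : ℝ) : ℝ :=
  -(deriv (deriv μ) t) / μ t
    - (deriv μ t / μ t) * ((d₁ + d₂) * ρ t - (J₁₁ t + J₂₂ t) - deriv J₂₁ t / J₂₁ t)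
    - J₂₁ t * deriv (fun s => (d₂ * ρ s - J₂₂ s) / J₂₁ s) t
    - (J₁₁ t * J₂₂ t - J₁₂ t * J₂₁ t - (d₂ * J₁₁ t + d₁ * J₂₂ t) * ρ t + d₁ * d₂ * (ρ t) ^ 2)

variable {d₁ d₂ ρ μ J₁₁ J₁₂ J₂₁ J₂₂ V₁ V₂}

theorem hasDerivAt_turingWronskian {t : ℝ} (hρ : DifferentiableAt ℝ ρ t)
    (hJ₂₁ : DifferentiableAt ℝ J₂₁ t) (hJ₂₂ : DifferentiableAt ℝ J₂₂ t)
    (hμ : DifferentiableAt ℝ μ t) (hμ' : DifferentiableAt ℝ (deriv μ) t)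
    (hV₁ : HasDerivAt V₁ (-(d₁ * ρ t) * V₁ t + J₁₁ t * V₁ t + J₁₂ t * V₂ t) t)
    (hV₂ : HasDerivAt V₂ (-(d₂ * ρ t) * V₂ t + J₂₁ t * V₁ t + J₂₂ t * V₂ t) t)
    (hμ0 : μ t ≠ 0) (hJ₂₁0 : J₂₁ t ≠ 0) :
    HasDerivAt (turingWronskian d₂ ρ μ J₂₁ J₂₂ V₁ V₂)
      ((deriv J₂₁ t / J₂₁ t + (J₁₁ t + J₂₂ t) - (d₁ + d₂) * ρ t)
          * turingWronskian d₂ ρ μ J₂₁ J₂₂ V₁ V₂ t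
        + μ t * V₂ t * turingSlack d₁ d₂ ρ μ J₁₁ J₁₂ J₂₁ J₂₂ t) t := by
  have hquot : deriv (fun s => (d₂ * ρ s - J₂₂ s) / J₂₁ s) t
      = ((d₂ * deriv ρ t - deriv J₂₂ t) * J₂₁ t - (d₂ * ρ t - J₂₂ t) * deriv J₂₁ t)
        / J₂₁ t ^ 2 :=
    (((hρ.hasDerivAt.const_mul d₂).sub hJ₂₂.hasDerivAt).div hJ₂₁.hasDerivAt hJ₂₁0).deriv
  have hG := (((hρ.hasDerivAt.const_mul d₂).neg.mul hV₂).add (hJ₂₁.hasDerivAt.mul hV₁)).add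
    (hJ₂₂.hasDerivAt.mul hV₂)
  have hW : HasDerivAt (turingWronskian d₂ ρ μ J₂₁ J₂₂ V₁ V₂) _ t :=
    (hG.mul hμ.hasDerivAt).sub (hV₂.mul hμ'.hasDerivAt)
  refine hW.congr_deriv ?_
  simp only [turingWronskian, turingSlack, hquot, Pi.add_apply, Pi.mul_apply, Pi.neg_apply]
  field_simp
  ring

end TuringSystem

theorem turing_instability_J21_branch_general
    (t₀ T : ℝ)
    (d₁ d₂ : ℝ)
    (ρ μ J₁₁ J₁₂ J₂₁ J₂₂ V₁ V₂ : ℝ → ℝ)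
    (hρd : ∀ t ∈ Icc t₀ T, DifferentiableAt ℝ ρ t)
    (hμ : ContDiff ℝ 2 μ)
    (hμpos : ∀ t ∈ Icc t₀ T, 0 < μ t)
    (hJ₂₁d : ∀ t ∈ Icc t₀ T, DifferentiableAt ℝ J₂₁ t)
    (hJ₂₂d : ∀ t ∈ Icc t₀ T, DifferentiableAt ℝ J₂₂ t)
    (hJ₂₁ne : ∀ t ∈ Icc t₀ T, J₂₁ t ≠ 0)
    (hineq : ∀ t ∈ Icc t₀ T,
      J₁₁ t * J₂₂ t - J₁₂ t * J₂₁ t - (d₂ * J₁₁ t + d₁ * J₂₂ t) * ρ t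
          + d₁ * d₂ * (ρ t) ^ 2
        < -(deriv (deriv μ) t) / μ t
          - (deriv μ t / μ t)
            * ((d₁ + d₂) * ρ t - (J₁₁ t + J₂₂ t) - deriv J₂₁ t / J₂₁ t)
          - J₂₁ t * deriv (fun s => (d₂ * ρ s - J₂₂ s) / J₂₁ s) t)
    (hV₁d : ∀ t ∈ Icc t₀ T, DifferentiableAt ℝ V₁ t)
    (hV₂d : ∀ t ∈ Icc t₀ T, DifferentiableAt ℝ V₂ t)
    (hODE₁ : ∀ t ∈ Icc t₀ T,
      deriv V₁ t = -(d₁ * ρ t) * V₁ t + J₁₁ t * V₁ t + J₁₂ t * V₂ t)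
    (hODE₂ : ∀ t ∈ Icc t₀ T,
      deriv V₂ t = -(d₂ * ρ t) * V₂ t + J₂₁ t * V₁ t + J₂₂ t * V₂ t)
    (hic : V₂ t₀ = μ t₀)
    (hic' : -(d₂ * ρ t₀) * μ t₀ + J₂₁ t₀ * V₁ t₀ + J₂₂ t₀ * μ t₀ = deriv μ t₀) :
    ∀ t ∈ Icc t₀ T, μ t ≤ V₂ t := by
  intro t ht
  have hV₁ : ∀ s ∈ Icc t₀ T, HasDerivAt V₁ _ s := fun s hs => hODE₁ s hs ▸ (hV₁d s hs).hasDerivAt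
  have hV₂ : ∀ s ∈ Icc t₀ T, HasDerivAt V₂ _ s := fun s hs => hODE₂ s hs ▸ (hV₂d s hs).hasDerivAt
  have hμd : Differentiable ℝ μ := hμ.differentiable two_ne_zero
  have hμ₀ : μ t₀ ≠ 0 := (hμpos t₀ (left_mem_Icc.2 (ht.1.trans ht.2))).ne'
  have key := le_and_nonneg_of_deriv_pos_of_eq_zero (c := 1)
    (u := fun s => V₂ s / μ s) (w := turingWronskian d₂ ρ μ J₂₁ J₂₂ V₁ V₂)
    (fun s hs => (hV₂ s hs).div (hμd s).hasDerivAt (hμpos s hs).ne')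
    (fun s hs => hasDerivAt_turingWronskian (hρd s hs) (hJ₂₁d s hs) (hJ₂₂d s hs) (hμd s)
      (hμ.differentiable_deriv_two s) (hV₁ s hs) (hV₂ s hs) (hμpos s hs).ne' (hJ₂₁ne s hs))
    (fun s _ hW => div_nonneg hW.le (sq_nonneg _))
    (fun s hs hu hW => by
      have hV₂pos : 0 < V₂ s := (hμpos s hs).trans_le ((one_le_div (hμpos s hs)).1 hu)
      rw [hW, mul_zero, zero_add]
      exact mul_pos (mul_pos (hμpos s hs) hV₂pos) (sub_pos.2 (hineq s hs)))
    (by simp [hic, hμ₀]) (le_of_eq (by rw [turingWronskian, hic, hic']; ring)) ht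
  exact (one_le_div (hμpos t ht)).1 key.1

/-- Theorem 3, second branch (the J₂₁-branch, inequality (T32)): generalized
Turing instability condition for a two-species reaction-diffusion system on an
evolving domain. Under the differential inequality, the component `V₂` of the
linearized perturbation grows at least as fast as the volume factor `μ`. -/
theorem turing_instability_J21_branch
    (t₀ T : ℝ) (ht : t₀ < T)
    (d₁ d₂ : ℝ) (hd₁ : 0 < d₁) (hd₂ : 0 < d₂)
    (ρ μ J₁₁ J₁₂ J₂₁ J₂₂ V₁ V₂ : ℝ → ℝ)
    (hρd : ∀ t ∈ Icc t₀ T, DifferentiableAt ℝ ρ t)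
    (hρc : ContinuousOn (deriv ρ) (Icc t₀ T))
    (hμ : ContDiff ℝ 2 μ)
    (hμpos : ∀ t ∈ Icc t₀ T, 0 < μ t)
    (hJ₁₁d : ∀ t ∈ Icc t₀ T, DifferentiableAt ℝ J₁₁ t)
    (hJ₁₁c : ContinuousOn (deriv J₁₁) (Icc t₀ T))
    (hJ₁₂d : ∀ t ∈ Icc t₀ T, DifferentiableAt ℝ J₁₂ t)
    (hJ₁₂c : ContinuousOn (deriv J₁₂) (Icc t₀ T))
    (hJ₂₁d : ∀ t ∈ Icc t₀ T, DifferentiableAt ℝ J₂₁ t)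
    (hJ₂₁c : ContinuousOn (deriv J₂₁) (Icc t₀ T))
    (hJ₂₂d : ∀ t ∈ Icc t₀ T, DifferentiableAt ℝ J₂₂ t)
    (hJ₂₂c : ContinuousOn (deriv J₂₂) (Icc t₀ T))
    (hJ₂₁ne : ∀ t ∈ Icc t₀ T, J₂₁ t ≠ 0)
    (hineq : ∀ t ∈ Icc t₀ T,
      J₁₁ t * J₂₂ t - J₁₂ t * J₂₁ t - (d₂ * J₁₁ t + d₁ * J₂₂ t) * ρ t
          + d₁ * d₂ * (ρ t) ^ 2
        < -(deriv (deriv μ) t) / μ t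
          - (deriv μ t / μ t)
            * ((d₁ + d₂) * ρ t - (J₁₁ t + J₂₂ t) - deriv J₂₁ t / J₂₁ t)
          - J₂₁ t * deriv (fun s => (d₂ * ρ s - J₂₂ s) / J₂₁ s) t)
    (hV₁d : ∀ t ∈ Icc t₀ T, DifferentiableAt ℝ V₁ t)
    (hV₂d : ∀ t ∈ Icc t₀ T, DifferentiableAt ℝ V₂ t)
    (hODE₁ : ∀ t ∈ Icc t₀ T,
      deriv V₁ t = -(d₁ * ρ t) * V₁ t + J₁₁ t * V₁ t + J₁₂ t * V₂ t)
    (hODE₂ : ∀ t ∈ Icc t₀ T,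
      deriv V₂ t = -(d₂ * ρ t) * V₂ t + J₂₁ t * V₁ t + J₂₂ t * V₂ t)
    (hic : V₂ t₀ = μ t₀)
    (hic' : -(d₂ * ρ t₀) * μ t₀ + J₂₁ t₀ * V₁ t₀ + J₂₂ t₀ * μ t₀ = deriv μ t₀) :
    ∀ t ∈ Icc t₀ T, μ t ≤ V₂ t :=
  turing_instability_J21_branch_general t₀ T d₁ d₂ ρ μ J₁₁ J₁₂ J₂₁ J₂₂ V₁ V₂ hρd hμ hμpos hJ₂₁d
    hJ₂₂d hJ₂₁ne hineq hV₁d hV₂d hODE₁ hODE₂ hic hic'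
end

section
/- Let t₀ < T and I = [t₀, T]. Let N ≥ 1 be an integer, d₁, d₂ > 0, let k be a positive integer, let r : ℝ → ℝ be twice continuously differentiable with r(t) > 0 on I, and let J₁₁, J₁₂, J₂₁, J₂₂ : ℝ → ℝ be continuously differentiable on I with J₁₂(t) ≠ 0 on I. Write det J = J₁₁J₂₂ - J₁₂J₂₁, tr J = J₁₁ + J₂₂, ρ(t) = k(k+N-1)/r(t)², and μ(t) = r(t)^N. Suppose that for all t ∈ I: det J(t) - (d₂J₁₁(t) + d₁J₂₂(t))·k(k+N-1)/r(t)² + d₁d₂·k²(k+N-1)²/r(t)⁴ < -N·r''(t)/r(t) - N(N-1)·(r'(t)/r(t))² - N·(r'(t)/r(t))·[(d₁+d₂)·k(k+N-1)/r(t)² - tr J(t) - J₁₂'(t)/J₁₂(t)] - J₁₂(t)·(d/dt)((d₁k(k+N-1)/r(t)² - J₁₁(t))/J₁₂(t)). Then any differentiable pair V₁, V₂ : ℝ → ℝ satisfying V₁' = -d₁ρ(t)V₁ + J₁₁(t)V₁ + J₁₂(t)V₂ and V₂' = -d₂ρ(t)V₂ + J₂₁(t)V₁ + J₂₂(t)V₂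 on I, with V₁(t₀) = μ(t₀) and -d₁ρ(t₀)μ(t₀) + J₁₁(t₀)μ(t₀) + J₁₂(t₀)V₂(t₀) = μ'(t₀), satisfies V₁(t) ≥ r(t)^N for all t ∈ I. -/
/-!
Eliminating `V₂` turns the system `V' = a V`, `a = J - ρ_k D`, into `V₁'' = p V₁' + q V₁` with
`p = tr a + a₁₂'/a₁₂` and `q = a₁₂ (a₁₁/a₁₂)' - det a`. The Wronskian `w = V₁' μ - V₁ μ'` then
satisfies `w' = p w + γ V₁` with `γ = p μ' + q μ - μ''`, and once `μ'/μ = N r'/r` and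
`μ''/μ = N r''/r + N(N-1)(r'/r)²` are substituted the hypothesis says exactly `γ > 0`.
Since `(V₁/μ)' = w/μ²`, the quantities `V₁/μ` and `w` start at `1` and `0` and feed each other
positively: `w` cannot turn negative while `V₁ > 0`, and `V₁/μ` cannot decrease while `w ≥ 0`.
Continuous induction on `[t₀, T]` gives `V₁/μ ≥ 1`.
-/

open Set Filter Topology

lemma HasDerivWithinAt.eventually_nonneg_nhdsGT {f : ℝ → ℝ} {f' x : ℝ}
    (hf : HasDerivWithinAt f f' (Ioi x) x) (hx : 0 ≤ f x) (hf' : f x = 0 → 0 < f') :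
    ∀ᶠ y in 𝓝[>] x, 0 ≤ f y := by
  rcases hx.lt_or_eq with hpos | hzero
  · exact (hf.continuousWithinAt.eventually (lt_mem_nhds hpos)).mono fun _ h => h.le
  · have hslope := (hasDerivWithinAt_iff_tendsto_slope' (lt_irrefl x)).1 hf
    filter_upwards [hslope.eventually (lt_mem_nhds (hf' hzero.symm)), self_mem_nhdsWithin]
      with y hy hxy
    rw [slope_def_field, ← hzero, sub_zero] at hy
    exact (div_pos_iff_of_pos_right (sub_pos.2 hxy)).1 hy |>.le

theorem le_and_nonneg_of_cooperative {a b : ℝ} {φ w φ' w' : ℝ → ℝ}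
    (hφ : ∀ x ∈ Icc a b, HasDerivWithinAt φ (φ' x) (Icc a b) x)
    (hw : ∀ x ∈ Icc a b, HasDerivWithinAt w (w' x) (Icc a b) x)
    (hφ' : ∀ x ∈ Ioo a b, 0 ≤ w x → 0 ≤ φ' x)
    (hw' : ∀ x ∈ Ico a b, 0 < φ x → w x = 0 → 0 < w' x)
    (hφa : 0 < φ a) (hwa : 0 ≤ w a) :
    ∀ x ∈ Icc a b, φ a ≤ φ x ∧ 0 ≤ w x := by
  have hφc : ContinuousOn φ (Icc a b) := fun x hx => (hφ x hx).continuousWithinAt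
  have hwc : ContinuousOn w (Icc a b) := fun x hx => (hw x hx).continuousWithinAt
  set s : Set ℝ := {x | φ a ≤ φ x ∧ 0 ≤ w x}
  have hs : IsClosed (s ∩ Icc a b) := by
    convert (hφc.preimage_isClosed_of_isClosed isClosed_Icc (isClosed_Ici (a := φ a))).inter
      (hwc.preimage_isClosed_of_isClosed isClosed_Icc (isClosed_Ici (a := 0))) using 1
    ext x
    simp only [s, mem_inter_iff, mem_ofPred_eq, mem_preimage, mem_Ici]
    tauto
  refine fun x hx => hs.Icc_subset_of_forall_mem_nhdsWithin ⟨le_rfl, hwa⟩ ?_ hx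
  rintro x ⟨⟨hφx, hwx⟩, hxI⟩
  have hIcc : Icc a b ∈ 𝓝[>] x :=
    ordConnected_Icc.mem_nhdsGT (Ico_subset_Icc_self hxI)
      (right_mem_Icc.2 (hxI.1.trans hxI.2.le)) hxI.2
  have hw_nonneg : ∀ᶠ y in 𝓝[>] x, 0 ≤ w y :=
    ((hw x (Ico_subset_Icc_self hxI)).mono_of_mem_nhdsWithin hIcc).eventually_nonneg_nhdsGT hwx
      (hw' x hxI (hφa.trans_le hφx))
  obtain ⟨c, hxc, hc⟩ := mem_nhdsGT_iff_exists_Ioo_subset.1 (inter_mem hw_nonneg hIcc)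
  have hIoo : Ioo x c ⊆ Ioo a b := by
    rw [← interior_Icc (a := a)]
    exact interior_maximal (fun y hy => (hc hy).2) isOpen_Ioo
  have hmono : MonotoneOn φ (Ico x c) := by
    have hsub : Ico x c ⊆ Icc a b := fun y hy =>
      hy.1.eq_or_lt.elim (fun h => h ▸ Ico_subset_Icc_self hxI) fun h => (hc ⟨h, hy.2⟩).2
    refine monotoneOn_of_hasDerivWithinAt_nonneg (f' := φ') (convex_Ico x c) (hφc.mono hsub)
      (fun y hy => ?_) (fun y hy => ?_) <;> rw [interior_Ico] at hy
    · exact ((hφ y (Ioo_subset_Icc_self (hIoo hy))).hasDerivAt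
        (Icc_mem_nhds (hIoo hy).1 (hIoo hy).2)).hasDerivWithinAt
    · exact hφ' y (hIoo hy) (hc hy).1
  filter_upwards [Ioo_mem_nhdsGT hxc] with y hy
  exact ⟨hφx.trans (hmono (left_mem_Ico.2 hxc) (Ioo_subset_Ico_self hy) hy.1.le), (hc hy).1⟩

theorem hasDerivWithinAt_deriv_of_linearSystem {s : Set ℝ} {a₁₁ a₁₂ a₂₁ a₂₂ V₁ V₂ : ℝ → ℝ}
    {x : ℝ}
    (hx : x ∈ s) (ha₁₁ : DifferentiableAt ℝ a₁₁ x) (ha₁₂ : DifferentiableAt ℝ a₁₂ x)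
    (ha₁₂x : a₁₂ x ≠ 0) (hV₁ : DifferentiableAt ℝ V₁ x) (hV₂ : DifferentiableAt ℝ V₂ x)
    (hsys₁ : ∀ y ∈ s, deriv V₁ y = a₁₁ y * V₁ y + a₁₂ y * V₂ y)
    (hsys₂ : deriv V₂ x = a₂₁ x * V₁ x + a₂₂ x * V₂ x) :
    HasDerivWithinAt (deriv V₁)
      ((a₁₁ x + a₂₂ x + deriv a₁₂ x / a₁₂ x) * deriv V₁ x
        + (a₁₂ x * deriv (fun y => a₁₁ y / a₁₂ y) x - (a₁₁ x * a₂₂ x - a₁₂ x * a₂₁ x)) * V₁ x)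
      s x := by
  have hrhs := ((ha₁₁.hasDerivAt.mul hV₁.hasDerivAt).add
    (ha₁₂.hasDerivAt.mul hV₂.hasDerivAt)).hasDerivWithinAt (s := s)
  refine (hrhs.congr (fun y hy => hsys₁ y hy) (hsys₁ x hx)).congr_deriv ?_
  have hquot : deriv (fun y => a₁₁ y / a₁₂ y) x
      = (deriv a₁₁ x * a₁₂ x - a₁₁ x * deriv a₁₂ x) / a₁₂ x ^ 2 :=
    (ha₁₁.hasDerivAt.div ha₁₂.hasDerivAt ha₁₂x).deriv
  rw [hquot, hsys₂, hsys₁ x hx]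
  field_simp
  ring

theorem hasDerivWithinAt_wronskian {s : Set ℝ} {μ V : ℝ → ℝ} {p q x : ℝ}
    (hμ : DifferentiableAt ℝ μ x) (hμ' : DifferentiableAt ℝ (deriv μ) x)
    (hV : DifferentiableAt ℝ V x)
    (hV' : HasDerivWithinAt (deriv V) (p * deriv V x + q * V x) s x) :
    HasDerivWithinAt (fun y => deriv V y * μ y - V y * deriv μ y)
      (p * (deriv V x * μ x - V x * deriv μ x)
        + (p * deriv μ x + q * μ x - deriv (deriv μ) x) * V x) s x :=
  ((hV'.mul hμ.hasDerivAt.hasDerivWithinAt).sub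
    (hV.hasDerivAt.hasDerivWithinAt.mul hμ'.hasDerivAt.hasDerivWithinAt)).congr_deriv (by ring)

theorem hasDerivAt_pow_of_ne_zero {r : ℝ → ℝ} {r' t : ℝ} (hr : HasDerivAt r r' t) (hrt : r t ≠ 0)
    (N : ℕ) : HasDerivAt (fun s => r s ^ N) (N * (r' / r t) * r t ^ N) t := by
  refine (hr.pow N).congr_deriv ?_
  cases N with
  | zero => simp
  | succ n => rw [Nat.add_sub_cancel]; field_simp; ring

theorem hasDerivAt_deriv_pow {r : ℝ → ℝ} {t : ℝ} (hr : ContDiff ℝ 2 r) (hrt : r t ≠ 0) (N : ℕ) :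
    HasDerivAt (deriv fun s => r s ^ N)
      ((N * deriv (deriv r) t / r t + N * (N - 1) * (deriv r t / r t) ^ 2) * r t ^ N) t := by
  have hr1 : Differentiable ℝ r := hr.differentiable (by norm_num)
  have hr2 : Differentiable ℝ (deriv r) :=
    ((contDiff_succ_iff_deriv (n := 1)).1 hr).2.2.differentiable one_ne_zero
  have hnear : ∀ᶠ s in 𝓝 t, r s ≠ 0 := hr1.continuous.continuousAt.eventually_ne hrt
  have heq : (deriv fun s => r s ^ N) =ᶠ[𝓝 t] fun s => N * (deriv r s / r s) * r s ^ N :=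
    hnear.mono fun s hs => (hasDerivAt_pow_of_ne_zero (hr1 s).hasDerivAt hs N).deriv
  refine HasDerivAt.congr_of_eventuallyEq ?_ heq
  have := (((hr2 t).hasDerivAt.div (hr1 t).hasDerivAt hrt).const_mul (N : ℝ)).mul
    (hasDerivAt_pow_of_ne_zero (hr1 t).hasDerivAt hrt N)
  refine this.congr_deriv ?_
  simp only [Pi.div_apply]
  field_simp
  ring

theorem le_fst_of_linearSystem {t₀ T : ℝ} {a₁₁ a₁₂ a₂₁ a₂₂ μ V₁ V₂ : ℝ → ℝ}
    (hμ : ∀ t ∈ Icc t₀ T, 0 < μ t)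
    (hμd : ∀ t ∈ Icc t₀ T, DifferentiableAt ℝ μ t)
    (hμd' : ∀ t ∈ Icc t₀ T, DifferentiableAt ℝ (deriv μ) t)
    (ha₁₁ : ∀ t ∈ Icc t₀ T, DifferentiableAt ℝ a₁₁ t)
    (ha₁₂ : ∀ t ∈ Icc t₀ T, DifferentiableAt ℝ a₁₂ t)
    (ha₁₂ne : ∀ t ∈ Icc t₀ T, a₁₂ t ≠ 0)
    (hV₁ : ∀ t ∈ Icc t₀ T, DifferentiableAt ℝ V₁ t)
    (hV₂ : ∀ t ∈ Icc t₀ T, DifferentiableAt ℝ V₂ t)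
    (hsys₁ : ∀ t ∈ Icc t₀ T, deriv V₁ t = a₁₁ t * V₁ t + a₁₂ t * V₂ t)
    (hsys₂ : ∀ t ∈ Icc t₀ T, deriv V₂ t = a₂₁ t * V₁ t + a₂₂ t * V₂ t)
    (hlt : ∀ t ∈ Icc t₀ T, a₁₁ t * a₂₂ t - a₁₂ t * a₂₁ t
      < deriv μ t / μ t * (a₁₁ t + a₂₂ t + deriv a₁₂ t / a₁₂ t) - deriv (deriv μ) t / μ t
        + a₁₂ t * deriv (fun s => a₁₁ s / a₁₂ s) t)
    (hV₁₀ : V₁ t₀ = μ t₀) (hV₁₀' : a₁₁ t₀ * μ t₀ + a₁₂ t₀ * V₂ t₀ = deriv μ t₀) :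
    ∀ t ∈ Icc t₀ T, μ t ≤ V₁ t := by
  intro t ht
  have ht₀ : t₀ ∈ Icc t₀ T := left_mem_Icc.2 (ht.1.trans ht.2)
  have hV₁'' : ∀ x ∈ Icc t₀ T, HasDerivWithinAt (deriv V₁) _ (Icc t₀ T) x := fun x hx =>
    hasDerivWithinAt_deriv_of_linearSystem hx (ha₁₁ x hx) (ha₁₂ x hx) (ha₁₂ne x hx) (hV₁ x hx)
      (hV₂ x hx) hsys₁ (hsys₂ x hx)
  have hγ : ∀ x ∈ Icc t₀ T, 0 < (a₁₁ x + a₂₂ x + deriv a₁₂ x / a₁₂ x) * deriv μ x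
      + (a₁₂ x * deriv (fun y => a₁₁ y / a₁₂ y) x - (a₁₁ x * a₂₂ x - a₁₂ x * a₂₁ x)) * μ x
      - deriv (deriv μ) x := fun x hx => by
    have hμx := (hμ x hx).ne'
    calc 0 < μ x * (_ - _) := mul_pos (hμ x hx) (sub_pos.2 (hlt x hx))
      _ = _ := by field_simp; ring
  have hw₀ : 0 ≤ deriv V₁ t₀ * μ t₀ - V₁ t₀ * deriv μ t₀ := by
    rw [hsys₁ t₀ ht₀, hV₁₀, ← hV₁₀']
    exact le_of_eq (by ring)
  obtain ⟨hφ, -⟩ := le_and_nonneg_of_cooperative (φ := fun s => V₁ s / μ s)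
    (fun x hx => ((hV₁ x hx).hasDerivAt.div (hμd x hx).hasDerivAt (hμ x hx).ne').hasDerivWithinAt)
    (fun x hx => hasDerivWithinAt_wronskian (hμd x hx) (hμd' x hx) (hV₁ x hx) (hV₁'' x hx))
    (fun x _ hw => div_nonneg hw (sq_nonneg _))
    (fun x hx hφ hw => by
      rw [hw, mul_zero, zero_add]
      exact mul_pos (hγ x (Ico_subset_Icc_self hx))
        ((div_pos_iff_of_pos_right (hμ x (Ico_subset_Icc_self hx))).1 hφ))
    (by rw [hV₁₀, div_self (hμ t₀ ht₀).ne']; exact one_pos) hw₀ t ht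
  rwa [hV₁₀, div_self (hμ t₀ ht₀).ne', one_le_div (hμ t ht)] at hφ

noncomputable def sphereEigenvalue (N k : ℕ) (R : ℝ) : ℝ := k * (k + N - 1) / R ^ 2

theorem turing_instability_evolving_sphere_general
    (t₀ T : ℝ)
    (N : ℕ)
    (d₁ d₂ : ℝ)
    (k : ℕ)
    (r J₁₁ J₁₂ J₂₁ J₂₂ V₁ V₂ : ℝ → ℝ)
    (hr : ContDiff ℝ 2 r)
    (hrpos : ∀ t ∈ Icc t₀ T, 0 < r t)
    (hJ₁₁d : ∀ t ∈ Icc t₀ T, DifferentiableAt ℝ J₁₁ t)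
    (hJ₁₂d : ∀ t ∈ Icc t₀ T, DifferentiableAt ℝ J₁₂ t)
    (hJ₁₂ne : ∀ t ∈ Icc t₀ T, J₁₂ t ≠ 0)
    (hineq : ∀ t ∈ Icc t₀ T,
      J₁₁ t * J₂₂ t - J₁₂ t * J₂₁ t
          - (d₂ * J₁₁ t + d₁ * J₂₂ t)
            * ((k : ℝ) * ((k : ℝ) + (N : ℝ) - 1) / (r t) ^ 2)
          + d₁ * d₂ * ((k : ℝ) ^ 2 * ((k : ℝ) + (N : ℝ) - 1) ^ 2 / (r t) ^ 4)
        < -(N : ℝ) * (deriv (deriv r) t) / r t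
          - (N : ℝ) * ((N : ℝ) - 1) * (deriv r t / r t) ^ 2
          - (N : ℝ) * (deriv r t / r t)
            * ((d₁ + d₂) * ((k : ℝ) * ((k : ℝ) + (N : ℝ) - 1) / (r t) ^ 2)
                - (J₁₁ t + J₂₂ t) - deriv J₁₂ t / J₁₂ t)
          - J₁₂ t * deriv
              (fun s =>
                (d₁ * (k : ℝ) * ((k : ℝ) + (N : ℝ) - 1) / (r s) ^ 2 - J₁₁ s)
                  / J₁₂ s) t)
    (hV₁d : ∀ t ∈ Icc t₀ T, DifferentiableAt ℝ V₁ t)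
    (hV₂d : ∀ t ∈ Icc t₀ T, DifferentiableAt ℝ V₂ t)
    (hODE₁ : ∀ t ∈ Icc t₀ T,
      deriv V₁ t
        = -(d₁ * ((k : ℝ) * ((k : ℝ) + (N : ℝ) - 1) / (r t) ^ 2)) * V₁ t
          + J₁₁ t * V₁ t + J₁₂ t * V₂ t)
    (hODE₂ : ∀ t ∈ Icc t₀ T,
      deriv V₂ t
        = -(d₂ * ((k : ℝ) * ((k : ℝ) + (N : ℝ) - 1) / (r t) ^ 2)) * V₂ t
          + J₂₁ t * V₁ t + J₂₂ t * V₂ t)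
    (hic : V₁ t₀ = (r t₀) ^ N)
    (hic' : -(d₁ * ((k : ℝ) * ((k : ℝ) + (N : ℝ) - 1) / (r t₀) ^ 2)) * (r t₀) ^ N
        + J₁₁ t₀ * (r t₀) ^ N + J₁₂ t₀ * V₂ t₀
        = deriv (fun s => (r s) ^ N) t₀) :
    ∀ t ∈ Icc t₀ T, (r t) ^ N ≤ V₁ t := by
  have hr1 : Differentiable ℝ r := hr.differentiable (by norm_num)
  have hμ : ∀ t ∈ Icc t₀ T, HasDerivAt (fun s => r s ^ N) _ t := fun t ht =>
    hasDerivAt_pow_of_ne_zero (hr1 t).hasDerivAt (hrpos t ht).ne' N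
  have hμ' : ∀ t ∈ Icc t₀ T, HasDerivAt (deriv fun s => r s ^ N) _ t := fun t ht =>
    hasDerivAt_deriv_pow hr (hrpos t ht).ne' N
  have ha₁₁ : ∀ t ∈ Icc t₀ T,
      DifferentiableAt ℝ (fun s => -(d₁ * sphereEigenvalue N k (r s)) + J₁₁ s) t := fun t ht =>
    (((differentiableAt_const _).div ((hr1 t).pow 2) (pow_ne_zero 2 (hrpos t ht).ne')).const_mul
      d₁).neg.add (hJ₁₁d t ht)
  have hquot : ∀ t, deriv (fun s => (-(d₁ * sphereEigenvalue N k (r s)) + J₁₁ s) / J₁₂ s) t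
      = -deriv (fun s => (d₁ * (k : ℝ) * ((k : ℝ) + (N : ℝ) - 1) / (r s) ^ 2 - J₁₁ s) / J₁₂ s)
          t := by
    intro t
    rw [← deriv.fun_neg]
    congr 1
    funext s
    simp only [sphereEigenvalue]
    ring
  refine le_fst_of_linearSystem (a₁₁ := fun s => -(d₁ * sphereEigenvalue N k (r s)) + J₁₁ s)
    (a₂₁ := J₂₁) (a₂₂ := fun s => -(d₂ * sphereEigenvalue N k (r s)) + J₂₂ s)
    (μ := fun s => r s ^ N)
    (fun t ht => pow_pos (hrpos t ht) N) (fun t ht => (hμ t ht).differentiableAt)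
    (fun t ht => (hμ' t ht).differentiableAt) ha₁₁ hJ₁₂d hJ₁₂ne hV₁d hV₂d
    (fun t ht => by rw [hODE₁ t ht, sphereEigenvalue]; ring)
    (fun t ht => by rw [hODE₂ t ht, sphereEigenvalue]; ring)
    (fun t ht => ?_) hic (by rw [← hic', sphereEigenvalue]; ring)
  have hrN := pow_ne_zero N (hrpos t ht).ne'
  rw [(hμ t ht).deriv, (hμ' t ht).deriv, hquot, mul_div_cancel_right₀ _ hrN,
    mul_div_cancel_right₀ _ hrN]
  simp only [sphereEigenvalue]
  linear_combination hineq t ht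

/-- Instantiation of Theorem 3 (first branch) on an isotropically evolving
N-sphere of radius `r(t)`: with eigenvalues `ρ_k(t) = k(k+N-1)/r(t)²` and volume
factor `μ(t) = r(t)^N`, the differential inequality forces the component `V₁`
of the linearized perturbation of the k-th mode to grow at least as fast as
`r(t)^N`. -/
theorem turing_instability_evolving_sphere
    (t₀ T : ℝ) (ht : t₀ < T)
    (N : ℕ) (hN : 1 ≤ N)
    (d₁ d₂ : ℝ) (hd₁ : 0 < d₁) (hd₂ : 0 < d₂)
    (k : ℕ) (hk : 1 ≤ k)
    (r J₁₁ J₁₂ J₂₁ J₂₂ V₁ V₂ : ℝ → ℝ)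
    (hr : ContDiff ℝ 2 r)
    (hrpos : ∀ t ∈ Icc t₀ T, 0 < r t)
    (hJ₁₁d : ∀ t ∈ Icc t₀ T, DifferentiableAt ℝ J₁₁ t)
    (hJ₁₁c : ContinuousOn (deriv J₁₁) (Icc t₀ T))
    (hJ₁₂d : ∀ t ∈ Icc t₀ T, DifferentiableAt ℝ J₁₂ t)
    (hJ₁₂c : ContinuousOn (deriv J₁₂) (Icc t₀ T))
    (hJ₂₁d : ∀ t ∈ Icc t₀ T, DifferentiableAt ℝ J₂₁ t)
    (hJ₂₁c : ContinuousOn (deriv J₂₁) (Icc t₀ T))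
    (hJ₂₂d : ∀ t ∈ Icc t₀ T, DifferentiableAt ℝ J₂₂ t)
    (hJ₂₂c : ContinuousOn (deriv J₂₂) (Icc t₀ T))
    (hJ₁₂ne : ∀ t ∈ Icc t₀ T, J₁₂ t ≠ 0)
    (hineq : ∀ t ∈ Icc t₀ T,
      J₁₁ t * J₂₂ t - J₁₂ t * J₂₁ t
          - (d₂ * J₁₁ t + d₁ * J₂₂ t)
            * ((k : ℝ) * ((k : ℝ) + (N : ℝ) - 1) / (r t) ^ 2)
          + d₁ * d₂ * ((k : ℝ) ^ 2 * ((k : ℝ) + (N : ℝ) - 1) ^ 2 / (r t) ^ 4)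
        < -(N : ℝ) * (deriv (deriv r) t) / r t
          - (N : ℝ) * ((N : ℝ) - 1) * (deriv r t / r t) ^ 2
          - (N : ℝ) * (deriv r t / r t)
            * ((d₁ + d₂) * ((k : ℝ) * ((k : ℝ) + (N : ℝ) - 1) / (r t) ^ 2)
                - (J₁₁ t + J₂₂ t) - deriv J₁₂ t / J₁₂ t)
          - J₁₂ t * deriv
              (fun s =>
                (d₁ * (k : ℝ) * ((k : ℝ) + (N : ℝ) - 1) / (r s) ^ 2 - J₁₁ s)
                  / J₁₂ s) t)
    (hV₁d : ∀ t ∈ Icc t₀ T, DifferentiableAt ℝ V₁ t)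
    (hV₂d : ∀ t ∈ Icc t₀ T, DifferentiableAt ℝ V₂ t)
    (hODE₁ : ∀ t ∈ Icc t₀ T,
      deriv V₁ t
        = -(d₁ * ((k : ℝ) * ((k : ℝ) + (N : ℝ) - 1) / (r t) ^ 2)) * V₁ t
          + J₁₁ t * V₁ t + J₁₂ t * V₂ t)
    (hODE₂ : ∀ t ∈ Icc t₀ T,
      deriv V₂ t
        = -(d₂ * ((k : ℝ) * ((k : ℝ) + (N : ℝ) - 1) / (r t) ^ 2)) * V₂ t
          + J₂₁ t * V₁ t + J₂₂ t * V₂ t)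
    (hic : V₁ t₀ = (r t₀) ^ N)
    (hic' : -(d₁ * ((k : ℝ) * ((k : ℝ) + (N : ℝ) - 1) / (r t₀) ^ 2)) * (r t₀) ^ N
        + J₁₁ t₀ * (r t₀) ^ N + J₁₂ t₀ * V₂ t₀
        = deriv (fun s => (r s) ^ N) t₀) :
    ∀ t ∈ Icc t₀ T, (r t) ^ N ≤ V₁ t :=
  turing_instability_evolving_sphere_general t₀ T N d₁ d₂ k r J₁₁ J₁₂ J₂₁ J₂₂ V₁ V₂ hr hrpos hJ₁₁d
    hJ₁₂d hJ₁₂ne hineq hV₁d hV₂d hODE₁ hODE₂ hic hic'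
end
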